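/- arXiv:2511.06813 — 3 statements merged into one kernel-verified Lean document; each statement's English description precedes it below -/
import Mathlib

section
/- Let X be a subordinator with Laplace exponent Φ, not identically zero, and T(t) = inf{u > 0 : X_u > t}. Then for all q, λ > 0: ∫_0^∞ e^{-qt} E[exp(-λ X_{T(t)-})] dt = Φ(q) / (q Φ(q+λ)). -/
open MeasureTheory ProbabilityTheory Filter Set Real
open scoped ENNReal NNReal

structure Subordinator {Ω : Type*} [MeasurableSpace Ω] (P : Measure Ω) where
  X : ℝ → Ω → ℝ
  meas : ∀ t, Measurable (X t)
  nonneg : ∀ t ω, 0 ≤ X t ω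
  zero : ∀ ω, X 0 ω = 0
  mono : ∀ ω, MonotoneOn (fun t => X t ω) (Set.Ici (0:ℝ))
  rightCont : ∀ ω t, 0 ≤ t → ContinuousWithinAt (fun u => X u ω) (Set.Ici t) t
  statIncr : ∀ s t : ℝ, 0 ≤ s → 0 ≤ t →
    P.map (fun ω => X (s + t) ω - X s ω) = P.map (X t)
  indepIncr : ∀ (n : ℕ) (t : ℕ → ℝ), Monotone t → 0 ≤ t 0 →
    iIndepFun
      (fun i : Fin n => fun ω => X (t (i + 1)) ω - X (t i) ω) P

noncomputable def Subordinator.lastPos {Ω : Type*} [MeasurableSpace Ω] {P : Measure Ω}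
    (S : Subordinator P) (s : ℝ) (ω : Ω) : ℝ :=
  sSup {y | ∃ t, 0 ≤ t ∧ S.X t ω = y ∧ y ≤ s}

namespace SubAux

noncomputable def hh (n : ℕ) : ℝ := (2:ℝ)⁻¹ ^ n

lemma hh_pos (n : ℕ) : 0 < hh n := pow_pos (by norm_num) n

lemma hh_lt_one (n : ℕ) : hh n ≤ 1 := pow_le_one₀ (by norm_num) (by norm_num)

lemma hh_tendsto : Tendsto hh atTop (nhds 0) :=
  tendsto_pow_atTop_nhds_zero_of_lt_one (by norm_num) (by norm_num)

variable {Ω : Type*} [MeasurableSpace Ω] {P : Measure Ω} (S : Subordinator P)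

noncomputable def gd (n k : ℕ) (ω : Ω) : ℝ := S.X (k * hh n) ω

lemma gd_nonneg (n k : ℕ) (ω : Ω) : 0 ≤ gd S n k ω := S.nonneg _ ω

lemma gd_zero (n : ℕ) (ω : Ω) : gd S n 0 ω = 0 := by
  simp [gd, S.zero ω]

lemma grid_nonneg (n k : ℕ) : (0:ℝ) ≤ k * hh n :=
  mul_nonneg (Nat.cast_nonneg k) (hh_pos n).le

lemma gd_mono (n : ℕ) {k k' : ℕ} (h : k ≤ k') (ω : Ω) : gd S n k ω ≤ gd S n k' ω :=
  S.mono ω (grid_nonneg n k) (grid_nonneg n k')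
    (mul_le_mul_of_nonneg_right (Nat.cast_le.2 h) (hh_pos n).le)

lemma gd_meas (n k : ℕ) : Measurable (gd S n k) := S.meas _

lemma gd_nest (n k : ℕ) : gd S n k = gd S (n+1) (2*k) := by
  unfold gd hh
  norm_num [pow_succ]
  ring_nf

noncomputable def Dn (n : ℕ) (t : ℝ) (ω : Ω) : ℝ≥0∞ :=
  ⨆ k : ℕ, if gd S n k ω ≤ t then ENNReal.ofReal (gd S n k ω) else 0

noncomputable def Dinf (t : ℝ) (ω : Ω) : ℝ≥0∞ := ⨆ n : ℕ, Dn S n t ω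

lemma Dn_le_ofReal (n : ℕ) (t : ℝ) (ω : Ω) : Dn S n t ω ≤ ENNReal.ofReal t := by
  refine iSup_le fun k => ?_
  split_ifs with h
  · exact ENNReal.ofReal_le_ofReal h
  · exact zero_le

lemma Dinf_le_ofReal (t : ℝ) (ω : Ω) : Dinf S t ω ≤ ENNReal.ofReal t :=
  iSup_le fun n => Dn_le_ofReal S n t ω

lemma Dn_ne_top (n : ℕ) (t : ℝ) (ω : Ω) : Dn S n t ω ≠ ⊤ :=
  ((Dn_le_ofReal S n t ω).trans_lt ENNReal.ofReal_lt_top).ne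

lemma Dinf_ne_top (t : ℝ) (ω : Ω) : Dinf S t ω ≠ ⊤ :=
  ((Dinf_le_ofReal S t ω).trans_lt ENNReal.ofReal_lt_top).ne

lemma Dn_mono_n (t : ℝ) (ω : Ω) : Monotone (fun n => Dn S n t ω) := by
  refine monotone_nat_of_le_succ fun n => ?_
  refine iSup_le fun k => ?_
  have : (if gd S n k ω ≤ t then ENNReal.ofReal (gd S n k ω) else 0)
      = (if gd S (n+1) (2*k) ω ≤ t then ENNReal.ofReal (gd S (n+1) (2*k) ω) else 0) := by
    rw [gd_nest]
  rw [this]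
  exact le_iSup (fun j => if gd S (n+1) j ω ≤ t then ENNReal.ofReal (gd S (n+1) j ω) else 0) (2*k)

lemma le_Dinf_of_grid {n k : ℕ} {t : ℝ} {ω : Ω} (h : gd S n k ω ≤ t) :
    ENNReal.ofReal (gd S n k ω) ≤ Dinf S t ω := by
  have h1 : ENNReal.ofReal (gd S n k ω)
      ≤ (if gd S n k ω ≤ t then ENNReal.ofReal (gd S n k ω) else 0) := by simp [h]
  exact h1.trans ((le_iSup _ k).trans (le_iSup (fun m => Dn S m t ω) n))

lemma Dn_meas (n : ℕ) : Measurable (fun p : ℝ × Ω => Dn S n p.1 p.2) := by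
  refine Measurable.iSup fun k => ?_
  have hs : MeasurableSet {p : ℝ × Ω | gd S n k p.2 ≤ p.1} :=
    measurableSet_le ((gd_meas S n k).comp measurable_snd) measurable_fst
  exact Measurable.ite hs
    (ENNReal.measurable_ofReal.comp ((gd_meas S n k).comp measurable_snd)) measurable_const

lemma Dinf_meas : Measurable (fun p : ℝ × Ω => Dinf S p.1 p.2) :=
  Measurable.iSup fun n => Dn_meas S n

end SubAux

namespace SubAux
variable {Ω : Type*} [MeasurableSpace Ω] {P : Measure Ω} (S : Subordinator P)

/-- dyadic grid point just to the right of u, within ε -/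
lemma exists_grid_btwn {u ε : ℝ} (hu : 0 ≤ u) (hε : 0 < ε) :
    ∃ n k : ℕ, u ≤ k * hh n ∧ k * hh n < u + ε := by
  obtain ⟨n, hn⟩ := exists_pow_lt_of_lt_one hε (show (2:ℝ)⁻¹ < 1 by norm_num)
  refine ⟨n, ⌊u / hh n⌋₊ + 1, ?_, ?_⟩
  · have h1 : u / hh n < ⌊u / hh n⌋₊ + 1 := Nat.lt_floor_add_one _
    have := (div_lt_iff₀ (hh_pos n)).1 h1
    push_cast
    linarith [this]
  · have h2 : (⌊u / hh n⌋₊ : ℝ) ≤ u / hh n := Nat.floor_le (div_nonneg hu (hh_pos n).le)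
    have h3 : (⌊u / hh n⌋₊ : ℝ) * hh n ≤ u := by
      have := mul_le_mul_of_nonneg_right h2 (hh_pos n).le
      rwa [div_mul_cancel₀ _ (hh_pos n).ne'] at this
    push_cast
    have : hh n < ε := by simpa [hh] using hn
    nlinarith [hh_pos n]

/-- right-continuity approximation: if X u ω < c, there is a grid point p ≥ u with X p ω < c -/
lemma approx (ω : Ω) {u c : ℝ} (hu : 0 ≤ u) (hc : S.X u ω < c) :
    ∃ n k : ℕ, S.X u ω ≤ gd S n k ω ∧ gd S n k ω < c ∧ u ≤ (k:ℝ) * hh n := by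
  have hcont := S.rightCont ω u hu
  have hmem : (fun v => S.X v ω) ⁻¹' (Iio c) ∈ nhdsWithin u (Ici u) :=
    hcont (Iio_mem_nhds hc)
  rw [Metric.mem_nhdsWithin_iff] at hmem
  obtain ⟨ε, hε, hball⟩ := hmem
  obtain ⟨n, k, h1, h2⟩ := exists_grid_btwn hu hε
  refine ⟨n, k, S.mono ω hu (grid_nonneg n k) h1, ?_, h1⟩
  have : (k:ℝ) * hh n ∈ Metric.ball u ε ∩ Ici u := by
    constructor
    · rw [Metric.mem_ball, Real.dist_eq, abs_lt]
      constructor <;> linarith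
    · exact h1
  exact hball this

def hitP (t : ℝ) (ω : Ω) : Prop := ∃ u, 0 ≤ u ∧ S.X u ω = t

lemma hit_iff (t : ℝ) (ω : Ω) : hitP S t ω ↔
    ∀ m : ℕ, ∃ n k : ℕ, t ≤ gd S n k ω ∧ gd S n k ω < t + 1/(m+1) := by
  constructor
  · rintro ⟨u, hu, hXu⟩ m
    have hc : S.X u ω < t + 1/(m+1) := by
      rw [hXu]; have : (0:ℝ) < 1/(m+1) := by positivity
      linarith
    obtain ⟨n, k, h1, h2, _⟩ := approx S ω hu hc
    exact ⟨n, k, hXu ▸ h1, h2⟩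
  · intro hm
    set A : Set ℝ := {u | 0 ≤ u ∧ t ≤ S.X u ω} with hA
    have hne : A.Nonempty := by
      obtain ⟨n, k, h1, _⟩ := hm 0
      exact ⟨k * hh n, grid_nonneg n k, h1⟩
    have hbdd : BddBelow A := ⟨0, fun u hu => hu.1⟩
    set τ := sInf A with hτ
    have hτ0 : 0 ≤ τ := le_csInf hne fun u hu => hu.1
    have hsub : A ⊆ Ici τ := fun u hu => csInf_le hbdd hu
    have hup : ∀ m : ℕ, S.X τ ω < t + 1/(m+1) := by
      intro m
      obtain ⟨n, k, h1, h2⟩ := hm m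
      have hkA : (k:ℝ) * hh n ∈ A := ⟨grid_nonneg n k, h1⟩
      have : τ ≤ k * hh n := csInf_le hbdd hkA
      exact lt_of_le_of_lt (S.mono ω hτ0 (grid_nonneg n k) this) h2
    have hge : t ≤ S.X τ ω := by
      have hcont : ContinuousWithinAt (fun v => S.X v ω) A τ :=
        (S.rightCont ω τ hτ0).mono hsub
      have hclos : τ ∈ closure A := csInf_mem_closure hne hbdd
      have himg : S.X τ ω ∈ closure ((fun v => S.X v ω) '' A) :=
        hcont.mem_closure_image hclos
      have hsubI : (fun v => S.X v ω) '' A ⊆ Ici t := by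
        rintro y ⟨u, hu, rfl⟩; exact hu.2
      have := closure_mono hsubI himg
      rwa [closure_Ici] at this
    have hle : S.X τ ω ≤ t := by
      by_contra hlt
      push_neg at hlt
      obtain ⟨m, hm'⟩ := exists_nat_one_div_lt (sub_pos.2 hlt)
      exact absurd (hup m) (by push_neg; linarith [hm'])
    exact ⟨τ, hτ0, le_antisymm hle hge⟩

lemma hit_meas : MeasurableSet {p : ℝ × Ω | hitP S p.1 p.2} := by
  have : {p : ℝ × Ω | hitP S p.1 p.2} =
      ⋂ m : ℕ, ⋃ n : ℕ, ⋃ k : ℕ,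
        {p : ℝ × Ω | p.1 ≤ gd S n k p.2 ∧ gd S n k p.2 < p.1 + 1/(m+1)} := by
    ext p
    simp only [mem_setOf_eq, mem_iInter, mem_iUnion]
    exact hit_iff S p.1 p.2
  rw [this]
  refine MeasurableSet.iInter fun m => MeasurableSet.iUnion fun n => MeasurableSet.iUnion fun k => ?_
  exact (measurableSet_le measurable_fst ((gd_meas S n k).comp measurable_snd)).inter
    (measurableSet_lt ((gd_meas S n k).comp measurable_snd)
      (measurable_fst.add_const _))

end SubAux

namespace SubAux
variable {Ω : Type*} [MeasurableSpace Ω] {P : Measure Ω} (S : Subordinator P)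

def lpSet (t : ℝ) (ω : Ω) : Set ℝ := {y | ∃ u, 0 ≤ u ∧ S.X u ω = y ∧ y ≤ t}

lemma lastPos_eq_sSup (t : ℝ) (ω : Ω) : S.lastPos t ω = sSup (lpSet S t ω) := rfl

lemma lpSet_nonempty {t : ℝ} (ht : 0 ≤ t) (ω : Ω) : (lpSet S t ω).Nonempty :=
  ⟨0, 0, le_refl 0, S.zero ω, ht⟩

lemma lpSet_bdd (t : ℝ) (ω : Ω) : BddAbove (lpSet S t ω) :=
  ⟨t, by rintro y ⟨u, hu, hXu, hyt⟩; exact hyt⟩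

lemma lastPos_nonneg {t : ℝ} (ht : 0 ≤ t) (ω : Ω) : 0 ≤ S.lastPos t ω :=
  le_csSup (lpSet_bdd S t ω) ⟨0, le_refl 0, S.zero ω, ht⟩

lemma lastPos_le {t : ℝ} (ht : 0 ≤ t) (ω : Ω) : S.lastPos t ω ≤ t :=
  csSup_le (lpSet_nonempty S ht ω) (by rintro y ⟨u, hu, hXu, hyt⟩; exact hyt)

lemma lastPos_of_hit {t : ℝ} (ht : 0 ≤ t) {ω : Ω} (h : hitP S t ω) : S.lastPos t ω = t := by
  obtain ⟨u, hu, hXu⟩ := h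
  refine le_antisymm (lastPos_le S ht ω) (le_csSup (lpSet_bdd S t ω) ⟨u, hu, hXu, le_refl t⟩)

lemma Dinf_le_lastPos {t : ℝ} (ht : 0 ≤ t) (ω : Ω) :
    Dinf S t ω ≤ ENNReal.ofReal (S.lastPos t ω) := by
  refine iSup_le fun n => iSup_le fun k => ?_
  split_ifs with h
  · exact ENNReal.ofReal_le_ofReal
      (le_csSup (lpSet_bdd S t ω) ⟨k * hh n, grid_nonneg n k, rfl, h⟩)
  · exact zero_le

lemma lastPos_of_not_hit {t : ℝ} (ht : 0 ≤ t) {ω : Ω} (h : ¬ hitP S t ω) :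
    ENNReal.ofReal (S.lastPos t ω) = Dinf S t ω := by
  refine le_antisymm ?_ (Dinf_le_lastPos S ht ω)
  have hle : S.lastPos t ω ≤ (Dinf S t ω).toReal := by
    refine csSup_le (lpSet_nonempty S ht ω) ?_
    rintro y ⟨u, hu, hXu, hyt⟩
    have hlt : S.X u ω < t := lt_of_le_of_ne (hXu ▸ hyt) (fun he => h ⟨u, hu, he⟩)
    obtain ⟨n, k, h1, h2, _⟩ := approx S ω hu hlt
    have : ENNReal.ofReal (gd S n k ω) ≤ Dinf S t ω := le_Dinf_of_grid S h2.le
    calc y = S.X u ω := hXu.symm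
    _ ≤ gd S n k ω := h1
    _ = (ENNReal.ofReal (gd S n k ω)).toReal := (ENNReal.toReal_ofReal (gd_nonneg S n k ω)).symm
    _ ≤ (Dinf S t ω).toReal := ENNReal.toReal_mono (Dinf_ne_top S t ω) this
  calc ENNReal.ofReal (S.lastPos t ω) ≤ ENNReal.ofReal (Dinf S t ω).toReal :=
        ENNReal.ofReal_le_ofReal hle
  _ = Dinf S t ω := ENNReal.ofReal_toReal (Dinf_ne_top S t ω)

open Classical in
lemma lastPos_formula {t : ℝ} (ht : 0 ≤ t) (ω : Ω) :
    S.lastPos t ω = if hitP S t ω then t else (Dinf S t ω).toReal := by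
  split_ifs with h
  · exact lastPos_of_hit S ht h
  · have := lastPos_of_not_hit S ht h
    rw [← this, ENNReal.toReal_ofReal (lastPos_nonneg S ht ω)]

lemma lastPos_neg {t : ℝ} (ht : t < 0) (ω : Ω) : S.lastPos t ω = 0 := by
  have : lpSet S t ω = ∅ := by
    ext y
    simp only [lpSet, mem_setOf_eq, mem_empty_iff_false, iff_false]
    rintro ⟨u, hu, hXu, hyt⟩
    exact absurd (hXu ▸ (S.nonneg u ω)) (by linarith)
  rw [lastPos_eq_sSup, this, Real.sSup_empty]

open Classical in
lemma lastPos_meas : Measurable (fun p : ℝ × Ω => S.lastPos p.1 p.2) := by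
  have heq : (fun p : ℝ × Ω => S.lastPos p.1 p.2) = fun p =>
      if 0 ≤ p.1 then (if hitP S p.1 p.2 then p.1 else (Dinf S p.1 p.2).toReal) else 0 := by
    funext p
    split_ifs with h0 hh
    · rw [lastPos_formula S h0, if_pos hh]
    · rw [lastPos_formula S h0, if_neg hh]
    · exact lastPos_neg S (by linarith [lt_of_not_ge h0]) p.2
  rw [heq]
  refine Measurable.ite (measurableSet_le measurable_const measurable_fst) ?_ measurable_const
  exact Measurable.ite (hit_meas S) measurable_fst ((Dinf_meas S).ennreal_toReal)

/-- the bad sections are countable -/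
lemma bad_section_countable (ω : Ω) :
    Set.Countable {t : ℝ | 0 < t ∧ hitP S t ω ∧ Dinf S t ω < ENNReal.ofReal t} := by
  set B := {t : ℝ | 0 < t ∧ hitP S t ω ∧ Dinf S t ω < ENNReal.ofReal t} with hB
  -- for each t in B, pick a rational in ((Dinf t).toReal, t)
  have key : ∀ t ∈ B, (Dinf S t ω).toReal < t := by
    rintro t ⟨ht, _, hlt⟩
    have := ENNReal.toReal_strict_mono (by simp) hlt
    rwa [ENNReal.toReal_ofReal ht.le] at this
  have sel : ∀ t ∈ B, ∃ r : ℚ, (Dinf S t ω).toReal < r ∧ (r:ℝ) < t := by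
    intro t ht
    exact exists_rat_btwn (key t ht)
  choose r hr1 hr2 using sel
  -- r is strictly monotone on B: if t1 < t2 in B then (r t1 : ℝ) < t1 ≤ (Dinf t2).toReal < r t2
  have hmono : ∀ t1 (h1 : t1 ∈ B), ∀ t2 (h2 : t2 ∈ B), t1 < t2 → (r t1 h1 : ℝ) < r t2 h2 := by
    intro t1 h1 t2 h2 hlt
    have ht1 : t1 ≤ (Dinf S t2 ω).toReal := by
      -- t1 is hit at some u; grid points just after u have value in [t1, t2]
      obtain ⟨u, hu, hXu⟩ := h1.2.1
      have hc : S.X u ω < t2 := hXu ▸ hlt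
      obtain ⟨n, k, ha1, ha2, _⟩ := approx S ω hu hc
      have hD : ENNReal.ofReal (gd S n k ω) ≤ Dinf S t2 ω := le_Dinf_of_grid S ha2.le
      calc t1 = S.X u ω := hXu.symm
      _ ≤ gd S n k ω := ha1
      _ = (ENNReal.ofReal (gd S n k ω)).toReal := (ENNReal.toReal_ofReal (gd_nonneg S n k ω)).symm
      _ ≤ (Dinf S t2 ω).toReal := ENNReal.toReal_mono (Dinf_ne_top S t2 ω) hD
    calc (r t1 h1 : ℝ) < t1 := hr2 t1 h1
    _ ≤ (Dinf S t2 ω).toReal := ht1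
    _ < r t2 h2 := hr1 t2 h2
  -- injectivity gives countability
  have hinj : Function.Injective (fun t : B => r t t.2) := by
    rintro ⟨t1, h1⟩ ⟨t2, h2⟩ he
    simp only [Subtype.mk_eq_mk]
    rcases lt_trichotomy t1 t2 with h | h | h
    · exact absurd (congrArg (fun q : ℚ => (q:ℝ)) he) (ne_of_lt (hmono t1 h1 t2 h2 h))
    · exact h
    · exact absurd (congrArg (fun q : ℚ => (q:ℝ)) he.symm) (ne_of_lt (hmono t2 h2 t1 h1 h))
  exact countable_coe_iff.mp hinj.countable
end SubAux

namespace SubAux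
variable {Ω : Type*} [MeasurableSpace Ω] {P : Measure Ω} (S : Subordinator P)

lemma exp_meas (a : ℝ) {f : Ω → ℝ} (hf : Measurable f) :
    Measurable (fun ω => Real.exp (-(a * f ω))) :=
  (Real.continuous_exp.comp (continuous_const.mul continuous_id).neg).measurable.comp hf

lemma exp_aesm (a : ℝ) {f : Ω → ℝ} (hf : Measurable f) :
    AEStronglyMeasurable (fun ω => Real.exp (-(a * f ω))) P :=
  (exp_meas a hf).aestronglyMeasurable

lemma exp_integrable [IsProbabilityMeasure P] (a : ℝ) (ha : 0 ≤ a) {f : Ω → ℝ}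
    (hf : Measurable f) (hfn : ∀ ω, 0 ≤ f ω) :
    Integrable (fun ω => Real.exp (-(a * f ω))) P := by
  refine Integrable.mono' (integrable_const 1) (exp_aesm a hf) ?_
  filter_upwards with ω
  rw [Real.norm_eq_abs, abs_of_pos (Real.exp_pos _)]
  exact Real.exp_le_one_iff.2 (by simp [mul_nonneg ha (hfn ω)])

def OmG : Set Ω := {ω | ∀ m : ℕ, ∃ j : ℕ, (m:ℝ) < S.X j ω}

lemma OmG_meas : MeasurableSet (OmG S) := by
  have h : OmG S = ⋂ m : ℕ, ⋃ j : ℕ, {ω | (m:ℝ) < S.X j ω} := by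
    ext ω; simp [OmG]
  rw [h]
  exact MeasurableSet.iInter fun m => MeasurableSet.iUnion fun j =>
    measurableSet_lt measurable_const (S.meas j)

lemma OmG_grid {ω : Ω} (hω : ω ∈ OmG S) (n : ℕ) (t : ℝ) : ∃ k : ℕ, t < gd S n k ω := by
  obtain ⟨m, hm⟩ := exists_nat_ge t
  obtain ⟨j, hj⟩ := hω m
  refine ⟨j * 2^n, ?_⟩
  have hcast : ((j * 2^n : ℕ) : ℝ) * hh n = j := by
    unfold hh
    push_cast
    rw [inv_pow]
    field_simp
  unfold gd
  rw [hcast]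
  exact lt_of_le_of_lt hm hj

open Classical in
lemma exists_kstar {ω : Ω} (hω : ω ∈ OmG S) (n : ℕ) {t : ℝ} (ht : 0 ≤ t) :
    ∃ k : ℕ, gd S n k ω ≤ t ∧ t < gd S n (k+1) ω ∧
      (Dn S n t ω).toReal = gd S n k ω ∧ ∀ j, gd S n j ω ≤ t → j ≤ k := by
  have hex : ∃ j, ¬ (gd S n j ω ≤ t) := by
    obtain ⟨k, hk⟩ := OmG_grid S hω n t
    exact ⟨k, not_le.2 hk⟩
  set m := Nat.find hex with hm
  have hm0 : m ≠ 0 := by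
    intro h0
    have := Nat.find_spec hex
    rw [← hm, h0] at this
    exact this (by rw [gd_zero]; exact ht)
  set k := m - 1 with hk
  have hkm : k + 1 = m := Nat.succ_pred_eq_of_ne_zero hm0
  have h1 : gd S n k ω ≤ t := by
    have := Nat.find_min hex (m := k) (by omega)
    exact not_not.1 this
  have h2 : t < gd S n (k+1) ω := by
    have := Nat.find_spec hex
    rw [← hm] at this
    rw [hkm]
    exact not_le.1 this
  have hmax : ∀ j, gd S n j ω ≤ t → j ≤ k := by
    intro j hj
    by_contra hjk
    push_neg at hjk
    have hmj : m ≤ j := by omega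
    exact absurd (le_trans (gd_mono S n hmj ω) hj) (hm ▸ Nat.find_spec hex)
  refine ⟨k, h1, h2, ?_, hmax⟩
  have hDn : Dn S n t ω = ENNReal.ofReal (gd S n k ω) := by
    refine le_antisymm (iSup_le fun i => ?_) ?_
    · split_ifs with hi
      · exact ENNReal.ofReal_le_ofReal (gd_mono S n (hmax i hi) ω)
      · exact zero_le
    · have : ENNReal.ofReal (gd S n k ω)
          = (if gd S n k ω ≤ t then ENNReal.ofReal (gd S n k ω) else 0) := by simp [h1]
      rw [this]
      exact le_iSup (fun i => if gd S n i ω ≤ t then ENNReal.ofReal (gd S n i ω) else 0) k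
  rw [hDn, ENNReal.toReal_ofReal (gd_nonneg S n k ω)]

lemma OmG_ae [IsProbabilityMeasure P] (Φ : ℝ → ℝ) (hΦpos : ∀ lam : ℝ, 0 < lam → 0 < Φ lam)
    (hΦ : ∀ lam t : ℝ, 0 ≤ lam → 0 ≤ t →
      ∫ ω, Real.exp (-(lam * S.X t ω)) ∂P = Real.exp (-(Φ lam * t))) :
    ∀ᵐ ω ∂P, ω ∈ OmG S := by
  rw [ae_iff]
  have hc : {ω | ¬ ω ∈ OmG S} = ⋃ m : ℕ, ⋂ j : ℕ, {ω | S.X j ω ≤ m} := by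
    ext ω
    simp [OmG, not_lt]
  rw [hc]
  refine measure_iUnion_null fun m => ?_
  -- P (⋂ j {X j ≤ m}) ≤ exp(m) * exp(-(Φ 1 * j)) → 0
  set C := ⋂ j : ℕ, {ω | S.X j ω ≤ (m:ℝ)} with hC
  have hbound : ∀ j : ℕ, P C ≤ ENNReal.ofReal (Real.exp (-(Φ 1 * j))) / ENNReal.ofReal (Real.exp (-(m:ℝ))) := by
    intro j
    have hmeas : AEMeasurable (fun ω => ENNReal.ofReal (Real.exp (-(1 * S.X j ω)))) P :=
      (ENNReal.measurable_ofReal.comp (exp_meas 1 (S.meas j))).aemeasurable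
    have hmar := mul_meas_ge_le_lintegral₀ hmeas (ENNReal.ofReal (Real.exp (-(m:ℝ))))
    have hsub : C ⊆ {ω | ENNReal.ofReal (Real.exp (-(m:ℝ))) ≤ ENNReal.ofReal (Real.exp (-(1 * S.X j ω)))} := by
      intro ω hω
      have hXm : S.X j ω ≤ m := by
        have := mem_iInter.1 hω j
        exact this
      exact ENNReal.ofReal_le_ofReal (Real.exp_le_exp.2 (by linarith))
    have hPC : ENNReal.ofReal (Real.exp (-(m:ℝ))) * P C
        ≤ ∫⁻ ω, ENNReal.ofReal (Real.exp (-(1 * S.X j ω))) ∂P := by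
      refine le_trans ?_ hmar
      exact mul_le_mul_right (measure_mono hsub) _
    have hlint : ∫⁻ ω, ENNReal.ofReal (Real.exp (-(1 * S.X j ω))) ∂P
        = ENNReal.ofReal (Real.exp (-(Φ 1 * j))) := by
      rw [← ofReal_integral_eq_lintegral_ofReal
        (exp_integrable (P := P) 1 zero_le_one (S.meas j) (fun ω => S.nonneg j ω))
        (Filter.Eventually.of_forall fun ω => (Real.exp_pos _).le)]
      rw [hΦ 1 j zero_le_one (Nat.cast_nonneg j)]
    rw [hlint] at hPC
    rw [ENNReal.le_div_iff_mul_le (Or.inl (by simp [Real.exp_pos])) (Or.inl (by simp))]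
    rw [mul_comm]
    exact hPC
  have htend : Tendsto (fun j : ℕ => ENNReal.ofReal (Real.exp (-(Φ 1 * j))) / ENNReal.ofReal (Real.exp (-(m:ℝ)))) atTop (nhds 0) := by
    have h1 : Tendsto (fun j : ℕ => Real.exp (-(Φ 1 * j))) atTop (nhds 0) := by
      have : ∀ j : ℕ, Real.exp (-(Φ 1 * j)) = (Real.exp (-(Φ 1)))^j := by
        intro j
        rw [← Real.exp_nat_mul]
        ring_nf
      simp_rw [this]
      exact tendsto_pow_atTop_nhds_zero_of_lt_one (Real.exp_pos _).le
        (Real.exp_lt_one_iff.2 (by linarith [hΦpos 1 one_pos]))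
    have h2 : Tendsto (fun j : ℕ => ENNReal.ofReal (Real.exp (-(Φ 1 * j)))) atTop (nhds 0) := by
      have := (ENNReal.continuous_ofReal.tendsto 0).comp h1
      simpa [Function.comp_def] using this
    have hb : (ENNReal.ofReal (Real.exp (-(m:ℝ)))) ≠ 0 := by simp [Real.exp_pos]
    have h3 := ENNReal.Tendsto.div_const (b := ENNReal.ofReal (Real.exp (-(m:ℝ)))) h2 (Or.inr hb)
    simpa [ENNReal.zero_div] using h3
  exact le_antisymm (le_of_tendsto_of_tendsto' tendsto_const_nhds htend hbound) zero_le

end SubAux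

namespace SubAux
variable {Ω : Type*} [MeasurableSpace Ω] {P : Measure Ω} (S : Subordinator P)

lemma lint_piece {q C a b : ℝ} (hq : 0 < q) (hC : 0 ≤ C) (ha : 0 ≤ a) (hab : a ≤ b) :
    ∫⁻ t in Ioi (0:ℝ), (Ico a b).indicator
        (fun t => ENNReal.ofReal (Real.exp (-(q*t)) * C)) t
      = ENNReal.ofReal ((Real.exp (-(q*a)) - Real.exp (-(q*b))) / q * C) := by
  rw [lintegral_indicator measurableSet_Ico, Measure.restrict_restrict measurableSet_Ico]
  have hset : (Ico a b ∩ Ioi 0 : Set ℝ) =ᵐ[volume] (Ioo a b : Set ℝ) := by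
    refine Filter.eventuallyEq_of_mem (s := {a}ᶜ) ?_ ?_
    · rw [mem_ae_iff, compl_compl]
      exact measure_singleton a
    · intro x hx
      simp only [mem_compl_iff, mem_singleton_iff] at hx
      simp only [eq_iff_iff, mem_inter_iff, mem_Ico, mem_Ioi, mem_Ioo]
      constructor
      · rintro ⟨⟨h1, h2⟩, h3⟩
        exact ⟨lt_of_le_of_ne h1 (Ne.symm hx), h2⟩
      · rintro ⟨h1, h2⟩
        exact ⟨⟨h1.le, h2⟩, lt_of_le_of_lt ha h1⟩
  rw [setLIntegral_congr hset]
  have hint : IntegrableOn (fun t => Real.exp (-(q*t)) * C) (Ioo a b) volume := by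
    refine IntegrableOn.mono_set ?_ Ioo_subset_Icc_self
    exact ((Real.continuous_exp.comp (continuous_const.mul continuous_id).neg).mul
      continuous_const).integrableOn_Icc
  rw [← ofReal_integral_eq_lintegral_ofReal hint
    (Filter.Eventually.of_forall fun t => mul_nonneg (Real.exp_pos _).le hC)]
  congr 1
  have hioc : ∫ t in Ioo a b, Real.exp (-(q*t)) * C = ∫ t in Ioc a b, Real.exp (-(q*t)) * C :=
    (integral_Ioc_eq_integral_Ioo).symm
  rw [hioc, ← intervalIntegral.integral_of_le hab]
  have hderiv : ∀ t ∈ uIcc a b, HasDerivAt (fun t => -(Real.exp (-(q*t)) * C / q))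
      (Real.exp (-(q*t)) * C) t := by
    intro t _
    have h1 : HasDerivAt (fun x : ℝ => -(q * x)) (-q) t := by
      simpa [Pi.neg_def] using ((hasDerivAt_id t).const_mul q).neg
    have h2 : HasDerivAt (fun x => Real.exp (-(q*x))) (Real.exp (-(q*t)) * (-q)) t :=
      (Real.hasDerivAt_exp _).comp t h1
    have h3 := ((h2.mul_const C).div_const q).neg
    refine h3.congr_deriv ?_
    field_simp
  rw [intervalIntegral.integral_eq_sub_of_hasDerivAt hderiv
    (((Real.continuous_exp.comp (continuous_const.mul continuous_id).neg).mul
      continuous_const).intervalIntegrable a b)]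
  field_simp
  ring

lemma slice_repr {ω : Ω} (hω : ω ∈ OmG S) (n : ℕ) (q lam : ℝ) :
    ∀ t ∈ Ioi (0:ℝ),
      ENNReal.ofReal (Real.exp (-(q*t)) * Real.exp (-(lam * (Dn S n t ω).toReal)))
      = ∑' k : ℕ, (Ico (gd S n k ω) (gd S n (k+1) ω)).indicator
          (fun s => ENNReal.ofReal (Real.exp (-(q*s)) * Real.exp (-(lam * gd S n k ω)))) t := by
  intro t ht
  obtain ⟨K, h1, h2, hD, hmax⟩ := exists_kstar S hω n (le_of_lt ht)
  rw [tsum_eq_single K]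
  · rw [indicator_of_mem (mem_Ico.2 ⟨h1, h2⟩), hD]
  · intro j hj
    rw [indicator_of_notMem]
    rw [mem_Ico]
    rintro ⟨hj1, hj2⟩
    have hjK : j ≤ K := hmax j hj1
    have hjK' : j < K := lt_of_le_of_ne hjK hj
    have : gd S n (j+1) ω ≤ gd S n K ω := gd_mono S n (by omega) ω
    linarith

end SubAux

namespace SubAux
variable {Ω : Type*} [MeasurableSpace Ω] {P : Measure Ω} (S : Subordinator P)

lemma exp_term [IsProbabilityMeasure P] (Φ : ℝ → ℝ)
    (hΦ : ∀ lam t : ℝ, 0 ≤ lam → 0 ≤ t →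
      ∫ ω, Real.exp (-(lam * S.X t ω)) ∂P = Real.exp (-(Φ lam * t)))
    {q lam : ℝ} (hq : 0 < q) (hl : 0 < lam) (n k : ℕ) :
    ∫ ω, Real.exp (-(lam * gd S n k ω)) * Real.exp (-(q * gd S n (k+1) ω)) ∂P
      = Real.exp (-(Φ (q+lam) * (k * hh n))) * Real.exp (-(Φ q * hh n)) := by
  classical
  set tt : ℕ → ℝ := fun j => ((if j = 0 then 0 else k + j - 1 : ℕ) : ℝ) * hh n with htt
  have httmono : Monotone tt := by
    intro a b hab
    unfold tt
    refine mul_le_mul_of_nonneg_right ?_ (hh_pos n).le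
    refine Nat.cast_le.2 ?_
    split_ifs with h1 h2
    · omega
    · omega
    · omega
    · omega
  have hindep := S.indepIncr 2 tt httmono (by simp [htt])
  have hIF : IndepFun (fun ω => S.X (tt 1) ω - S.X (tt 0) ω)
      (fun ω => S.X (tt 2) ω - S.X (tt 1) ω) P := by
    have := hindep.indepFun (i := (0 : Fin 2)) (j := (1 : Fin 2)) (by decide)
    simpa using this
  have ht0 : tt 0 = 0 := by simp [htt]
  have ht1 : tt 1 = (k : ℝ) * hh n := by norm_num [htt]
  have ht2 : tt 2 = ((k:ℝ) + 1) * hh n := by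
    have : (k + 2 - 1 : ℕ) = k + 1 := by omega
    norm_num [htt, this]
  have hf0 : (fun ω => S.X (tt 1) ω - S.X (tt 0) ω) = gd S n k := by
    funext ω
    rw [ht0, ht1, S.zero ω]
    simp [gd]
  set Z : Ω → ℝ := fun ω => S.X (tt 2) ω - S.X (tt 1) ω with hZ
  have hIF2 : IndepFun (gd S n k) Z P := by rwa [hf0] at hIF
  have hZmeas : Measurable Z := (S.meas _).sub (S.meas _)
  have hZnonneg : ∀ ω, 0 ≤ Z ω := by
    intro ω
    simp only [hZ, sub_nonneg]
    refine S.mono ω (mem_Ici.2 ?_) (mem_Ici.2 ?_) ?_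
    · rw [ht1]; exact grid_nonneg n k
    · rw [ht2]; exact mul_nonneg (by positivity) (hh_pos n).le
    rw [ht1, ht2]
    nlinarith [hh_pos n]
  -- comp with exponentials
  have hφm : Measurable fun x : ℝ => Real.exp (-((q+lam) * x)) :=
    (Real.continuous_exp.comp (continuous_const.mul continuous_id).neg).measurable
  have hψm : Measurable fun x : ℝ => Real.exp (-(q * x)) :=
    (Real.continuous_exp.comp (continuous_const.mul continuous_id).neg).measurable
  have hIF3 : IndepFun (fun ω => Real.exp (-((q+lam) * gd S n k ω)))
      (fun ω => Real.exp (-(q * Z ω))) P := hIF2.comp hφm hψm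
  have heq : (fun ω => Real.exp (-(lam * gd S n k ω)) * Real.exp (-(q * gd S n (k+1) ω)))
      = fun ω => Real.exp (-((q+lam) * gd S n k ω)) * Real.exp (-(q * Z ω)) := by
    funext ω
    rw [← Real.exp_add, ← Real.exp_add, hZ, ht1, ht2]
    congr 1
    have hgd1 : gd S n (k+1) ω = S.X (((k:ℝ)+1) * hh n) ω := by
      unfold gd
      push_cast
      ring_nf
    rw [hgd1]
    unfold gd
    ring
  rw [heq]
  have hmul : (fun ω => Real.exp (-((q+lam) * gd S n k ω)) * Real.exp (-(q * Z ω)))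
      = (fun ω => Real.exp (-((q+lam) * gd S n k ω))) * (fun ω => Real.exp (-(q * Z ω))) := rfl
  rw [hmul, hIF3.integral_mul_eq_mul_integral
    (exp_integrable (q+lam) (by positivity) (gd_meas S n k) (gd_nonneg S n k)).aestronglyMeasurable
    (exp_integrable q hq.le hZmeas hZnonneg).aestronglyMeasurable]
  congr 1
  · exact hΦ (q+lam) ((k:ℝ) * hh n) (by positivity) (grid_nonneg n k)
  · -- law of Z is law of X (hh n)
    have hstat := S.statIncr ((k:ℝ) * hh n) (hh n) (grid_nonneg n k) (hh_pos n).le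
    have hZeq : Z = fun ω => S.X ((k:ℝ) * hh n + hh n) ω - S.X ((k:ℝ) * hh n) ω := by
      funext ω
      rw [hZ, ht1, ht2]
      ring_nf
    have haesm : AEStronglyMeasurable (fun x : ℝ => Real.exp (-(q * x)))
        (P.map (S.X (hh n))) := hψm.aestronglyMeasurable
    calc ∫ ω, Real.exp (-(q * Z ω)) ∂P
        = ∫ x, Real.exp (-(q * x)) ∂(P.map (fun ω => S.X ((k:ℝ) * hh n + hh n) ω - S.X ((k:ℝ) * hh n) ω)) := by
          rw [integral_map ((show Measurable (fun ω => S.X ((k:ℝ) * hh n + hh n) ω - S.X ((k:ℝ) * hh n) ω) from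
            (S.meas _).sub (S.meas _)).aemeasurable) ?_]
          · rw [hZeq]
          · exact hψm.aestronglyMeasurable
    _ = ∫ x, Real.exp (-(q * x)) ∂(P.map (S.X (hh n))) := by rw [hstat]
    _ = ∫ ω, Real.exp (-(q * S.X (hh n) ω)) ∂P := integral_map (S.meas _).aemeasurable haesm
    _ = Real.exp (-(Φ q * hh n)) := hΦ q (hh n) hq.le (hh_pos n).le

end SubAux

namespace SubAux
variable {Ω : Type*} [MeasurableSpace Ω] {P : Measure Ω} (S : Subordinator P)

lemma stepA [IsProbabilityMeasure P] (Φ : ℝ → ℝ)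
    (hΦpos : ∀ lam : ℝ, 0 < lam → 0 < Φ lam)
    (hΦ : ∀ lam t : ℝ, 0 ≤ lam → 0 ≤ t →
      ∫ ω, Real.exp (-(lam * S.X t ω)) ∂P = Real.exp (-(Φ lam * t)))
    {q lam : ℝ} (hq : 0 < q) (hl : 0 < lam) (n : ℕ) :
    ∫⁻ ω, (∫⁻ t in Ioi (0:ℝ),
        ENNReal.ofReal (Real.exp (-(q*t)) * Real.exp (-(lam * (Dn S n t ω).toReal)))) ∂P
      = ENNReal.ofReal ((1 - Real.exp (-(Φ q * hh n)))
          / (q * (1 - Real.exp (-(Φ (q+lam) * hh n))))) := by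
  set r := Real.exp (-(Φ (q+lam) * hh n)) with hr
  set s := Real.exp (-(Φ q * hh n)) with hs
  have hql : 0 < q + lam := by linarith
  have hr0 : 0 ≤ r := (Real.exp_pos _).le
  have hr1 : r < 1 := Real.exp_lt_one_iff.2 (by nlinarith [hΦpos (q+lam) hql, hh_pos n])
  have hs1 : s ≤ 1 := (Real.exp_le_one_iff.2 (by nlinarith [hΦpos q hq, hh_pos n]))
  have hc0 : 0 ≤ (1 - s) / q := div_nonneg (by linarith) hq.le
  -- inner integral identity for good ω
  have hinner : ∀ ω ∈ OmG S,
      (∫⁻ t in Ioi (0:ℝ),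
          ENNReal.ofReal (Real.exp (-(q*t)) * Real.exp (-(lam * (Dn S n t ω).toReal))))
      = ∑' k : ℕ, ENNReal.ofReal ((Real.exp (-((q+lam) * gd S n k ω))
          - Real.exp (-(lam * gd S n k ω)) * Real.exp (-(q * gd S n (k+1) ω))) / q) := by
    intro ω hω
    rw [setLIntegral_congr_fun measurableSet_Ioi (slice_repr S hω n q lam)]
    have hmeas : ∀ k : ℕ, Measurable fun u : ℝ =>
        ENNReal.ofReal (Real.exp (-(q*u)) * Real.exp (-(lam * gd S n k ω))) := by
      intro k
      refine Measurable.ennreal_ofReal (Measurable.mul ?_ measurable_const)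
      exact (Real.continuous_exp.comp (continuous_const.mul continuous_id).neg).measurable
    rw [lintegral_tsum (fun k => ((hmeas k).indicator measurableSet_Ico).aemeasurable)]
    congr 1
    funext k
    rw [lint_piece hq (Real.exp_pos _).le (gd_nonneg S n k ω) (gd_mono S n (Nat.le_succ k) ω)]
    congr 1
    rw [div_mul_eq_mul_div, sub_mul]
    congr 2
    · rw [← Real.exp_add]; congr 1; ring
    · rw [mul_comm]
  have hOmG := OmG_ae S Φ hΦpos hΦ
  rw [lintegral_congr_ae (hOmG.mono fun ω hω => hinner ω hω)]
  rw [lintegral_tsum (fun k => (Measurable.ennreal_ofReal (by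
      exact ((exp_meas (q+lam) (gd_meas S n k)).sub
        ((exp_meas lam (gd_meas S n k)).mul (exp_meas q (gd_meas S n (k+1))))).div_const q)).aemeasurable)]
  -- per-term expectation
  have hterm : ∀ k : ℕ,
      ∫⁻ ω, ENNReal.ofReal ((Real.exp (-((q+lam) * gd S n k ω))
          - Real.exp (-(lam * gd S n k ω)) * Real.exp (-(q * gd S n (k+1) ω))) / q) ∂P
      = ENNReal.ofReal (r^k * ((1 - s) / q)) := by
    intro k
    have hf1 : Integrable (fun ω => Real.exp (-((q+lam) * gd S n k ω))) P :=
      exp_integrable (q+lam) hql.le (gd_meas S n k) (gd_nonneg S n k)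
    have hf2 : Integrable (fun ω => Real.exp (-(lam * gd S n k ω)) * Real.exp (-(q * gd S n (k+1) ω))) P := by
      refine Integrable.mono' (integrable_const 1)
        (((exp_meas lam (gd_meas S n k)).mul (exp_meas q (gd_meas S n (k+1)))).aestronglyMeasurable) ?_
      filter_upwards with ω
      rw [Real.norm_eq_abs, abs_of_pos (by positivity)]
      have h1 : Real.exp (-(lam * gd S n k ω)) ≤ 1 :=
        Real.exp_le_one_iff.2 (by simp [mul_nonneg hl.le (gd_nonneg S n k ω)])
      have h2 : Real.exp (-(q * gd S n (k+1) ω)) ≤ 1 :=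
        Real.exp_le_one_iff.2 (by simp [mul_nonneg hq.le (gd_nonneg S n (k+1) ω)])
      nlinarith [Real.exp_pos (-(lam * gd S n k ω)), Real.exp_pos (-(q * gd S n (k+1) ω))]
    have hnn : ∀ ω, 0 ≤ (Real.exp (-((q+lam) * gd S n k ω))
        - Real.exp (-(lam * gd S n k ω)) * Real.exp (-(q * gd S n (k+1) ω))) / q := by
      intro ω
      refine div_nonneg ?_ hq.le
      rw [sub_nonneg, ← Real.exp_add]
      refine Real.exp_le_exp.2 ?_
      have := gd_mono S n (Nat.le_succ k) ω
      nlinarith [gd_nonneg S n k ω]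
    have hfi : Integrable (fun ω => (Real.exp (-((q+lam) * gd S n k ω))
        - Real.exp (-(lam * gd S n k ω)) * Real.exp (-(q * gd S n (k+1) ω))) / q) P :=
      (hf1.sub hf2).div_const q
    rw [← ofReal_integral_eq_lintegral_ofReal hfi (Filter.Eventually.of_forall hnn)]
    congr 1
    rw [integral_div, integral_sub hf1 hf2]
    have hE1 : ∫ ω, Real.exp (-((q+lam) * gd S n k ω)) ∂P
        = Real.exp (-(Φ (q+lam) * ((k:ℝ) * hh n))) :=
      hΦ (q+lam) ((k:ℝ) * hh n) hql.le (grid_nonneg n k)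
    rw [hE1, exp_term S Φ hΦ hq hl n k]
    have hrk : Real.exp (-(Φ (q+lam) * ((k:ℝ) * hh n))) = r^k := by
      rw [hr, ← Real.exp_nat_mul]
      congr 1
      ring
    rw [hrk, ← hs]
    field_simp
  simp_rw [hterm]
  rw [← ENNReal.ofReal_tsum_of_nonneg (fun k => mul_nonneg (pow_nonneg hr0 k) hc0)
    ((summable_geometric_of_lt_one hr0 hr1).mul_right _)]
  rw [tsum_mul_right, tsum_geometric_of_lt_one hr0 hr1]
  congr 1
  have h1r : 1 - r ≠ 0 := by linarith
  field_simp

end SubAux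

namespace SubAux

lemma slope_exp {a : ℝ} :
    Tendsto (fun h : ℝ => (1 - Real.exp (-(a*h))) / h) (nhdsWithin 0 {(0:ℝ)}ᶜ) (nhds a) := by
  have hderiv : HasDerivAt (fun h : ℝ => 1 - Real.exp (-(a*h))) a 0 := by
    have h1 : HasDerivAt (fun x : ℝ => -(a * x)) (-a) 0 := by
      simpa [Pi.neg_def] using ((hasDerivAt_id (0:ℝ)).const_mul a).neg
    have h2 : HasDerivAt (fun x => Real.exp (-(a*x))) (Real.exp (-(a*0)) * (-a)) 0 :=
      (Real.hasDerivAt_exp _).comp 0 h1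
    have h3 := (h2.const_sub 1)
    refine h3.congr_deriv ?_
    simp
  have := hasDerivAt_iff_tendsto_slope.1 hderiv
  refine this.congr' ?_
  filter_upwards with h
  simp [slope, div_eq_inv_mul]

lemma stepC (Φ : ℝ → ℝ) (hΦpos : ∀ lam : ℝ, 0 < lam → 0 < Φ lam)
    {q lam : ℝ} (hq : 0 < q) (hl : 0 < lam) :
    Tendsto (fun n => (1 - Real.exp (-(Φ q * hh n)))
        / (q * (1 - Real.exp (-(Φ (q+lam) * hh n))))) atTop
      (nhds (Φ q / (q * Φ (q+lam)))) := by
  have hhh : Tendsto hh atTop (nhdsWithin 0 {(0:ℝ)}ᶜ) :=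
    tendsto_nhdsWithin_of_tendsto_nhds_of_eventually_within _ hh_tendsto
      (Filter.Eventually.of_forall fun n => (hh_pos n).ne')
  have hA : Tendsto (fun n => (1 - Real.exp (-(Φ q * hh n))) / hh n) atTop (nhds (Φ q)) :=
    slope_exp.comp hhh
  have hB : Tendsto (fun n => (1 - Real.exp (-(Φ (q+lam) * hh n))) / hh n) atTop
      (nhds (Φ (q+lam))) := slope_exp.comp hhh
  have hql : 0 < q + lam := by linarith
  have hden : q * Φ (q+lam) ≠ 0 := by
    have := hΦpos (q+lam) hql
    positivity
  have := (hA.div ((hB.const_mul q)) (by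
    have := hΦpos (q+lam) hql
    positivity))
  refine this.congr ?_
  intro n
  have hne : hh n ≠ 0 := (hh_pos n).ne'
  simp only [Pi.div_apply]
  field_simp


end SubAux

namespace SubAux
variable {Ω : Type*} [MeasurableSpace Ω] {P : Measure Ω} (S : Subordinator P)

lemma Dinf_eq_lastPos {t : ℝ} {ω : Ω} (ht : 0 < t)
    (hnb : ¬ (hitP S t ω ∧ Dinf S t ω < ENNReal.ofReal t)) :
    Dinf S t ω = ENNReal.ofReal (S.lastPos t ω) := by
  by_cases hhit : hitP S t ω
  · have h1 : ¬ (Dinf S t ω < ENNReal.ofReal t) := fun h => hnb ⟨hhit, h⟩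
    push_neg at h1
    have h2 : Dinf S t ω ≤ ENNReal.ofReal t := by
      have := Dinf_le_lastPos S ht.le ω
      rwa [lastPos_of_hit S ht.le hhit] at this
    rw [le_antisymm h2 h1, lastPos_of_hit S ht.le hhit]
  · exact (lastPos_of_not_hit S ht.le hhit).symm

theorem main [IsProbabilityMeasure P] (Φ : ℝ → ℝ)
    (hΦpos : ∀ lam : ℝ, 0 < lam → 0 < Φ lam)
    (hΦ : ∀ lam t : ℝ, 0 ≤ lam → 0 ≤ t →
      ∫ ω, Real.exp (-(lam * S.X t ω)) ∂P = Real.exp (-(Φ lam * t)))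
    {q lam : ℝ} (hq : 0 < q) (hl : 0 < lam) :
    ∫ t in Set.Ioi (0:ℝ),
        Real.exp (-(q * t)) * ∫ ω, Real.exp (-(lam * S.lastPos t ω)) ∂P
      = Φ q / (q * Φ (q + lam)) := by
  set μpr := (volume.restrict (Ioi (0:ℝ))).prod P with hμpr
  set Fn : ℕ → ℝ × Ω → ℝ≥0∞ := fun n p =>
    ENNReal.ofReal (Real.exp (-(q*p.1)) * Real.exp (-(lam * (Dn S n p.1 p.2).toReal))) with hFn
  set Finf : ℝ × Ω → ℝ≥0∞ := fun p =>
    ENNReal.ofReal (Real.exp (-(q*p.1)) * Real.exp (-(lam * S.lastPos p.1 p.2))) with hFinf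
  have hexpfst : Measurable fun p : ℝ × Ω => Real.exp (-(q * p.1)) :=
    (Real.continuous_exp.comp (continuous_const.mul continuous_id).neg).measurable.comp
      measurable_fst
  have hFnmeas : ∀ n, Measurable (Fn n) := by
    intro n
    refine Measurable.ennreal_ofReal (hexpfst.mul ?_)
    exact (Real.continuous_exp.comp (continuous_const.mul continuous_id).neg).measurable.comp
      (Dn_meas S n).ennreal_toReal
  have hFinfmeas : Measurable Finf := by
    refine Measurable.ennreal_ofReal (hexpfst.mul ?_)
    exact (Real.continuous_exp.comp (continuous_const.mul continuous_id).neg).measurable.comp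
      (lastPos_meas S)
  -- Step A: value of ∫ Fn
  have hstepA : ∀ n, ∫⁻ p, Fn n p ∂μpr
      = ENNReal.ofReal ((1 - Real.exp (-(Φ q * hh n)))
          / (q * (1 - Real.exp (-(Φ (q+lam) * hh n))))) := by
    intro n
    rw [hμpr, lintegral_prod_symm' _ (hFnmeas n)]
    exact stepA S Φ hΦpos hΦ hq hl n
  -- the dominating function
  have hbound_fin : ∫⁻ p, ENNReal.ofReal (Real.exp (-(q * p.1))) ∂μpr ≠ ⊤ := by
    rw [hμpr, lintegral_prod _ (hexpfst.ennreal_ofReal.aemeasurable)]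
    have : ∀ t : ℝ, ∫⁻ _ : Ω, ENNReal.ofReal (Real.exp (-(q * t))) ∂P
        = ENNReal.ofReal (Real.exp (-(q * t))) := by
      intro t
      rw [lintegral_const, measure_univ, mul_one]
    simp_rw [this]
    have hint : IntegrableOn (fun t => Real.exp (-(q * t))) (Ioi (0:ℝ)) volume := by
      have := exp_neg_integrableOn_Ioi 0 hq
      simpa [neg_mul] using this
    rw [← ofReal_integral_eq_lintegral_ofReal hint
      (Filter.Eventually.of_forall fun t => (Real.exp_pos _).le)]
    exact ENNReal.ofReal_ne_top
  have hboundFn : ∀ n, Fn n ≤ᵐ[μpr] fun p => ENNReal.ofReal (Real.exp (-(q * p.1))) := by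
    intro n
    filter_upwards with p
    rw [hFn]
    refine ENNReal.ofReal_le_ofReal ?_
    have h1 : Real.exp (-(lam * (Dn S n p.1 p.2).toReal)) ≤ 1 :=
      Real.exp_le_one_iff.2 (by simp [mul_nonneg hl.le ENNReal.toReal_nonneg])
    nlinarith [Real.exp_pos (-(q * p.1)), Real.exp_pos (-(lam * (Dn S n p.1 p.2).toReal))]
  -- a.e. convergence
  have hbadmeas : MeasurableSet {p : ℝ × Ω | 0 < p.1 ∧ hitP S p.1 p.2
      ∧ Dinf S p.1 p.2 < ENNReal.ofReal p.1} := by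
    have h1 : MeasurableSet {p : ℝ × Ω | Dinf S p.1 p.2 < ENNReal.ofReal p.1} :=
      measurableSet_lt (Dinf_meas S) measurable_fst.ennreal_ofReal
    exact (measurableSet_lt measurable_const measurable_fst).inter ((hit_meas S).inter h1)
  have hbadnull : μpr {p : ℝ × Ω | 0 < p.1 ∧ hitP S p.1 p.2
      ∧ Dinf S p.1 p.2 < ENNReal.ofReal p.1} = 0 := by
    rw [hμpr, Measure.prod_apply_symm hbadmeas]
    have : ∀ ω : Ω, (volume.restrict (Ioi (0:ℝ)))
        ((fun t => (t, ω)) ⁻¹' {p : ℝ × Ω | 0 < p.1 ∧ hitP S p.1 p.2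
          ∧ Dinf S p.1 p.2 < ENNReal.ofReal p.1}) = 0 := by
      intro ω
      have h0 : (volume : Measure ℝ) ((fun t => (t, ω)) ⁻¹' {p : ℝ × Ω | 0 < p.1
          ∧ hitP S p.1 p.2 ∧ Dinf S p.1 p.2 < ENNReal.ofReal p.1}) = 0 := by
        refine measure_mono_null (fun t ht => ht) ((bad_section_countable S ω).measure_zero volume)
      exact le_antisymm ((Measure.restrict_apply_le _ _).trans h0.le) zero_le
    simp_rw [this]
    simp
  have hfst_pos : ∀ᵐ p ∂μpr, 0 < p.1 := by
    rw [hμpr, ae_iff]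
    have hset : {p : ℝ × Ω | ¬ 0 < p.1} = (Iic (0:ℝ)) ×ˢ (univ : Set Ω) := by
      ext p; simp [not_lt]
    rw [hset, Measure.prod_prod]
    rw [Measure.restrict_apply measurableSet_Iic]
    simp [Iic_inter_Ioi, Ioc_self]
  have hconv : ∀ᵐ p ∂μpr, Tendsto (fun n => Fn n p) atTop (nhds (Finf p)) := by
    have hbad' : ∀ᵐ p ∂μpr, ¬ (0 < p.1 ∧ hitP S p.1 p.2
        ∧ Dinf S p.1 p.2 < ENNReal.ofReal p.1) := by
      rw [ae_iff]
      simpa using hbadnull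
    filter_upwards [hfst_pos, hbad'] with p hp hnb
    have hDtend : Tendsto (fun n => Dn S n p.1 p.2) atTop (nhds (Dinf S p.1 p.2)) :=
      tendsto_atTop_iSup (Dn_mono_n S p.1 p.2)
    have hDeq : Dinf S p.1 p.2 = ENNReal.ofReal (S.lastPos p.1 p.2) :=
      Dinf_eq_lastPos S hp (fun hc => hnb ⟨hp, hc⟩)
    have htoReal : Tendsto (fun n => (Dn S n p.1 p.2).toReal) atTop
        (nhds (S.lastPos p.1 p.2)) := by
      have h1 := (ENNReal.tendsto_toReal (Dinf_ne_top S p.1 p.2)).comp hDtend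
      rwa [hDeq, ENNReal.toReal_ofReal (lastPos_nonneg S hp.le p.2)] at h1
    have hcont : Continuous fun x : ℝ =>
        ENNReal.ofReal (Real.exp (-(q*p.1)) * Real.exp (-(lam * x))) := by
      exact ENNReal.continuous_ofReal.comp (continuous_const.mul
        (Real.continuous_exp.comp (continuous_const.mul continuous_id).neg))
    exact (hcont.tendsto _).comp htoReal
  -- dominated convergence
  have hlim : Tendsto (fun n => ∫⁻ p, Fn n p ∂μpr) atTop (nhds (∫⁻ p, Finf p ∂μpr)) :=
    tendsto_lintegral_of_dominated_convergence _ hFnmeas hboundFn hbound_fin hconv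
  -- combine with step A and step C
  have hval : Tendsto (fun n => ∫⁻ p, Fn n p ∂μpr) atTop
      (nhds (ENNReal.ofReal (Φ q / (q * Φ (q+lam))))) := by
    simp_rw [hstepA]
    exact (ENNReal.continuous_ofReal.tendsto _).comp (stepC Φ hΦpos hq hl)
  have hI : ∫⁻ p, Finf p ∂μpr = ENNReal.ofReal (Φ q / (q * Φ (q+lam))) :=
    tendsto_nhds_unique hlim hval
  -- Step D : convert to Bochner
  have hlastPos_meas_t : ∀ t : ℝ, Measurable fun ω => S.lastPos t ω := fun t =>
    (lastPos_meas S).comp (measurable_prodMk_left)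
  set G : ℝ → ℝ≥0∞ := fun t => ∫⁻ ω, ENNReal.ofReal (Real.exp (-(lam * S.lastPos t ω))) ∂P
    with hG
  have hlastPos_nonneg : ∀ (t : ℝ) (ω : Ω), 0 ≤ S.lastPos t ω := by
    intro t ω
    rcases lt_or_ge t 0 with ht | ht
    · rw [lastPos_neg S ht]
    · exact lastPos_nonneg S ht ω
  have hGle : ∀ t, G t ≤ 1 := by
    intro t
    rw [hG]
    have h1 : ∫⁻ ω, ENNReal.ofReal (Real.exp (-(lam * S.lastPos t ω))) ∂P ≤ ∫⁻ _, 1 ∂P := by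
      refine lintegral_mono fun ω => ?_
      simp only [ENNReal.ofReal_le_one]
      exact Real.exp_le_one_iff.2 (by simp [mul_nonneg hl.le (hlastPos_nonneg t ω)])
    simpa using h1
  have hGne_top : ∀ t, G t ≠ ⊤ := fun t => ((hGle t).trans_lt (by norm_num)).ne
  have hGmeas : Measurable G := by
    rw [hG]
    refine Measurable.lintegral_prod_right ?_
    exact Measurable.ennreal_ofReal ((Real.continuous_exp.comp
      (continuous_const.mul continuous_id).neg).measurable.comp (lastPos_meas S))
  have hinner : ∀ t : ℝ, ∫ ω, Real.exp (-(lam * S.lastPos t ω)) ∂P = (G t).toReal := by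
    intro t
    exact integral_eq_lintegral_of_nonneg_ae
      (Filter.Eventually.of_forall fun ω => (Real.exp_pos _).le)
      ((exp_meas lam (hlastPos_meas_t t)).aestronglyMeasurable)
  have houter : ∫ t in Ioi (0:ℝ),
        Real.exp (-(q * t)) * ∫ ω, Real.exp (-(lam * S.lastPos t ω)) ∂P
      = ∫ t in Ioi (0:ℝ), Real.exp (-(q*t)) * (G t).toReal := by
    refine integral_congr_ae (Filter.Eventually.of_forall fun t => ?_)
    dsimp only
    rw [hinner t]
  rw [houter]
  have h2 : ∫ t in Ioi (0:ℝ), Real.exp (-(q*t)) * (G t).toReal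
      = (∫⁻ t in Ioi (0:ℝ), ENNReal.ofReal (Real.exp (-(q*t)) * (G t).toReal)).toReal := by
    exact integral_eq_lintegral_of_nonneg_ae
      (Filter.Eventually.of_forall fun t => mul_nonneg (Real.exp_pos _).le ENNReal.toReal_nonneg)
      (((Real.continuous_exp.comp (continuous_const.mul continuous_id).neg).measurable.mul
        hGmeas.ennreal_toReal).aestronglyMeasurable)
  have h3 : ∫⁻ t in Ioi (0:ℝ), ENNReal.ofReal (Real.exp (-(q*t)) * (G t).toReal)
      = ∫⁻ p, Finf p ∂μpr := by
    rw [hμpr, lintegral_prod _ hFinfmeas.aemeasurable]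
    refine lintegral_congr fun t => ?_
    have hexpmeas : Measurable fun ω : Ω => ENNReal.ofReal (Real.exp (-(lam * S.lastPos t ω))) :=
      Measurable.ennreal_ofReal (exp_meas lam (hlastPos_meas_t t))
    calc ENNReal.ofReal (Real.exp (-(q*t)) * (G t).toReal)
        = ENNReal.ofReal (Real.exp (-(q*t))) * G t := by
          rw [ENNReal.ofReal_mul (Real.exp_pos _).le, ENNReal.ofReal_toReal (hGne_top t)]
    _ = ∫⁻ ω, ENNReal.ofReal (Real.exp (-(q*t))) * ENNReal.ofReal (Real.exp (-(lam * S.lastPos t ω))) ∂P := by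
          rw [lintegral_const_mul _ hexpmeas]
    _ = ∫⁻ ω, Finf (t, ω) ∂P := by
          refine lintegral_congr fun ω => ?_
          rw [hFinf, ← ENNReal.ofReal_mul (Real.exp_pos _).le]
  rw [h2, h3, hI, ENNReal.toReal_ofReal]
  exact div_nonneg (hΦpos q hq).le (by nlinarith [hΦpos (q+lam) (by linarith : (0:ℝ) < q + lam)])

end SubAux

def SlowlyVaryingAtTop (ℓ : ℝ → ℝ) : Prop :=
  ∀ lam > 0, Tendsto (fun x => ℓ (lam * x) / ℓ x) atTop (nhds 1)

def SlowlyVaryingAtZero (ℓ : ℝ → ℝ) : Prop :=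
  ∀ lam > 0, Tendsto (fun x => ℓ (lam * x) / ℓ x) (nhdsWithin 0 (Set.Ioi 0)) (nhds 1)

theorem stmt4 {Ω : Type*} [MeasurableSpace Ω] (P : Measure Ω) [IsProbabilityMeasure P]
    (S : Subordinator P) (Φ : ℝ → ℝ)
    (hΦpos : ∀ lam : ℝ, 0 < lam → 0 < Φ lam)
    (hΦ : ∀ lam t : ℝ, 0 ≤ lam → 0 ≤ t →
      ∫ ω, Real.exp (-(lam * S.X t ω)) ∂P = Real.exp (-(Φ lam * t))) :
    ∀ q lam : ℝ, 0 < q → 0 < lam →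
      ∫ t in Set.Ioi (0:ℝ),
          Real.exp (-(q * t)) * ∫ ω, Real.exp (-(lam * S.lastPos t ω)) ∂P
        = Φ q / (q * Φ (q + lam)) := by
  intro q lam hq hl
  exact SubAux.main S Φ hΦpos hΦ hq hl
end

section
/- Let f_n : (0,∞) → (0,∞), for n ∈ ℕ ∪ {∞}, be non-increasing functions, and suppose there exists a non-empty open interval I ⊂ (0,∞) such that for all q ∈ I, ∫_0^∞ e^{-qt} f_n(t) dt → ∫_0^∞ e^{-qt} f_∞(t) dt < ∞ as n → ∞. Then f_n(t) → f_∞(t) as n → ∞ for every continuity point t ∈ (0,∞) of f_∞. -/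
open MeasureTheory Filter Set Real
open scoped ENNReal

lemma stmt5_aemeas {φ : ℝ → ℝ} (h : AntitoneOn φ (Set.Ioi 0)) :
    AEMeasurable φ (volume.restrict (Set.Ioi (0:ℝ))) := by
  have hA : Antitone (fun x : ℝ => φ (Real.exp x)) := by
    intro x y hxy
    exact h (Real.exp_pos x) (Real.exp_pos y) (Real.exp_le_exp.2 hxy)
  have hm : Measurable fun x : ℝ => φ (Real.exp x) := hA.measurable
  have hm2 : Measurable fun t : ℝ => φ (Real.exp (Real.log t)) :=
    hm.comp Real.measurable_log
  refine hm2.aemeasurable.congr ?_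
  filter_upwards [ae_restrict_mem measurableSet_Ioi] with t ht
  rw [Real.exp_log ht]



lemma stmt5_bound {φ : ℝ → ℝ} (hpos : ∀ t ∈ Set.Ioi (0:ℝ), 0 ≤ φ t)
    (hanti : AntitoneOn φ (Set.Ioi 0)) {q M : ℝ} (hq : 0 < q)
    (hInt : IntegrableOn (fun s => Real.exp (-(q*s)) * φ s) (Set.Ioi 0))
    (hM : (∫ s in Set.Ioi (0:ℝ), Real.exp (-(q*s)) * φ s) ≤ M) {t : ℝ} (ht : 0 < t) :
    φ t ≤ q * M / (1 - Real.exp (-(q*t))) := by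
  have hexp : Real.exp (-(q*t)) < 1 := by
    rw [Real.exp_lt_one_iff]
    nlinarith
  have hden : 0 < 1 - Real.exp (-(q*t)) := by linarith
  -- the integral of the exponential over Ioc 0 t
  have hkey : ∫ s in Set.Ioc (0:ℝ) t, Real.exp (-(q*s)) = (1 - Real.exp (-(q*t)))/q := by
    rw [← intervalIntegral.integral_of_le ht.le]
    have h : ∀ s ∈ Set.uIcc (0:ℝ) t, HasDerivAt (fun s => -Real.exp (-(q*s))/q)
        (Real.exp (-(q*s))) s := by
      intro s _
      have h1 : HasDerivAt (fun s : ℝ => -(q*s)) (-q) s := by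
        simpa using ((hasDerivAt_id s).const_mul (-q))
      have h2 := (Real.hasDerivAt_exp (-(q*s))).comp s h1
      have h3 := (h2.neg).div_const q
      exact h3.congr_deriv (by field_simp)
    rw [intervalIntegral.integral_eq_sub_of_hasDerivAt h
      ((Real.continuous_exp.comp (by continuity)).intervalIntegrable 0 t)]
    simp
    field_simp
    ring
  have hIntExp : IntegrableOn (fun s => Real.exp (-(q*s)) * φ t) (Set.Ioc 0 t) :=
    ((Real.continuous_exp.comp (by continuity)).mul continuous_const).integrableOn_Ioc
  have hIntOc : IntegrableOn (fun s => Real.exp (-(q*s)) * φ s) (Set.Ioc 0 t) :=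
    hInt.mono_set Set.Ioc_subset_Ioi_self
  have step1 : φ t * ((1 - Real.exp (-(q*t)))/q)
      = ∫ s in Set.Ioc (0:ℝ) t, Real.exp (-(q*s)) * φ t := by
    rw [MeasureTheory.integral_mul_const, hkey, mul_comm]
  have step2 : (∫ s in Set.Ioc (0:ℝ) t, Real.exp (-(q*s)) * φ t)
      ≤ ∫ s in Set.Ioc (0:ℝ) t, Real.exp (-(q*s)) * φ s := by
    refine MeasureTheory.setIntegral_mono_on hIntExp hIntOc measurableSet_Ioc ?_
    intro s hs
    have hs0 : 0 < s := hs.1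
    have : φ t ≤ φ s := hanti hs0 ht hs.2
    exact mul_le_mul_of_nonneg_left this (Real.exp_nonneg _)
  have step3 : (∫ s in Set.Ioc (0:ℝ) t, Real.exp (-(q*s)) * φ s)
      ≤ ∫ s in Set.Ioi (0:ℝ), Real.exp (-(q*s)) * φ s := by
    refine MeasureTheory.setIntegral_mono_set hInt ?_ (HasSubset.Subset.eventuallyLE Set.Ioc_subset_Ioi_self)
    filter_upwards [ae_restrict_mem measurableSet_Ioi] with s hs
    exact mul_nonneg (Real.exp_nonneg _) (hpos s hs)
  have : φ t * ((1 - Real.exp (-(q*t)))/q) ≤ M := by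
    rw [step1]; exact le_trans step2 (le_trans step3 hM)
  rw [le_div_iff₀ hden]
  calc φ t * (1 - Real.exp (-(q*t))) = (φ t * ((1 - Real.exp (-(q*t)))/q)) * q := by
        field_simp
    _ ≤ M * q := by
        apply mul_le_mul_of_nonneg_right this hq.le
    _ = q * M := mul_comm _ _


lemma stmt5_helly {C : ℝ → ℝ} {h : ℕ → ℝ → ℝ}
    (hmem : ∀ k (q : ℚ), 0 < q → h k (q:ℝ) ∈ Set.Icc 0 (C q)) :
    ∃ φ : ℕ → ℕ, StrictMono φ ∧ ∃ L : ℚ → ℝ, ∀ q : ℚ, 0 < q →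
      Tendsto (fun k => h (φ k) (q:ℝ)) atTop (nhds (L q)) := by
  set Q := {q : ℚ // 0 < q}
  let X := ∀ q : Q, Set.Icc (0:ℝ) (C q.1)
  haveI : CompactSpace X := by infer_instance
  let x : ℕ → X := fun k q => ⟨h k (q.1:ℝ), hmem k q.1 q.2⟩
  obtain ⟨a, φ, hφ, hconv⟩ := CompactSpace.tendsto_subseq x
  refine ⟨φ, hφ, fun q => if hq : 0 < q then (a ⟨q, hq⟩ : ℝ) else 0, fun q hq => ?_⟩
  have := (continuous_apply (⟨q, hq⟩ : Q)).continuousAt.tendsto.comp hconv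
  have h2 := (continuous_subtype_val.tendsto _).comp this
  simpa [dif_pos hq, Function.comp_def] using h2


lemma stmt5_moments {u : ℝ → ℝ} (hu : Integrable u)
    (hsupp : ∀ t, t ∉ Set.Ioi (0:ℝ) → u t = 0)
    (hmom : ∀ j : ℕ, ∫ t in Set.Ioi (0:ℝ), Real.exp (-(j*t)) * u t = 0) :
    ∀ᵐ t ∂(volume.restrict (Set.Ioi (0:ℝ))), u t = 0 := by
  have hglob : ∀ᵐ t ∂(volume : Measure ℝ), u t = 0 := by
    apply ae_eq_zero_of_integral_contDiff_smul_eq_zero hu.locallyIntegrable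
    intro ψ hψ hψc
    -- find R with ψ y = 0 for y ≥ R
    obtain ⟨R, hR⟩ : ∃ R : ℝ, ∀ y : ℝ, R ≤ |y| → ψ y = 0 := by
      obtain ⟨R, hR⟩ := (hψc.isCompact.isBounded).subset_closedBall 0
      refine ⟨R + 1, fun y hy => ?_⟩
      apply image_eq_zero_of_notMem_tsupport
      intro hmem
      have := hR hmem
      simp only [Metric.mem_closedBall, dist_zero_right, Real.norm_eq_abs] at this
      linarith
    -- define Θ₀
    set Θ₀ : ℝ → ℝ := fun x => if x ≤ 0 then 0 else ψ (-Real.log x) with hΘ₀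
    have hΘcont : Continuous Θ₀ := by
      rw [continuous_iff_continuousAt]
      intro x
      rcases lt_trichotomy x 0 with hx | hx | hx
      · have : Θ₀ =ᶠ[nhds x] (fun _ => 0) := by
          filter_upwards [eventually_lt_nhds hx] with y hy
          simp [hΘ₀, hy.le]
        exact ContinuousAt.congr continuousAt_const this.symm
      · have : Θ₀ =ᶠ[nhds x] (fun _ => 0) := by
          subst hx
          have hball : Set.Ioo (-(Real.exp (-(max R 1)))) (Real.exp (-(max R 1))) ∈ nhds (0:ℝ) := by
            apply Ioo_mem_nhds <;> [simp [Real.exp_pos]; simp [Real.exp_pos]]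
          filter_upwards [hball] with y hy
          rcases le_or_gt y 0 with h0 | h0
          · simp [hΘ₀, h0]
          · have : y < Real.exp (-(max R 1)) := hy.2
            have hlog : Real.log y < -(max R 1) := by
              rw [← Real.log_exp (-(max R 1))]
              exact Real.log_lt_log h0 this
            have hpos' : 0 < -Real.log y := by
              have := le_max_right R 1; linarith
            have : R ≤ |(-Real.log y)| := by
              rw [abs_of_pos hpos']
              have := le_max_left R 1; linarith
            simp [hΘ₀, not_le.2 h0, hR _ this]
        exact ContinuousAt.congr continuousAt_const this.symm
      · have hc : ContinuousAt (fun y => ψ (-Real.log y)) x :=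
          hψ.continuous.continuousAt.comp ((Real.continuousAt_log hx.ne').neg)
        apply hc.congr
        filter_upwards [eventually_gt_nhds hx] with y hy
        simp [hΘ₀, not_le.2 hy]
    set Θ : C(Set.Icc (0:ℝ) 1, ℝ) := ⟨fun x => Θ₀ x.1, hΘcont.comp continuous_subtype_val⟩
    -- integral with polynomial substituted vanishes
    have hpoly0 : ∀ p : Polynomial ℝ, ∫ t in Set.Ioi (0:ℝ), p.eval (Real.exp (-t)) * u t = 0 := by
      intro p
      have hint_each : ∀ i : ℕ, IntegrableOn
          (fun t => p.coeff i * (Real.exp (-((i:ℝ)*t)) * u t)) (Set.Ioi 0) := by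
        intro i
        refine Integrable.const_mul ?_ _
        refine Integrable.mono' (hu.restrict.abs) ?_ ?_
        · exact ((Real.continuous_exp.comp (by continuity)).aestronglyMeasurable.mul
            hu.aestronglyMeasurable.restrict)
        · filter_upwards [ae_restrict_mem measurableSet_Ioi] with t ht
          rw [Real.norm_eq_abs, abs_mul, abs_exp]
          have : Real.exp (-((i:ℝ)*t)) ≤ 1 := by
            rw [Real.exp_le_one_iff]
            have : (0:ℝ) ≤ (i:ℝ)*t := mul_nonneg (Nat.cast_nonneg i) (le_of_lt ht)
            linarith
          nlinarith [abs_nonneg (u t)]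
      have : ∀ t ∈ Set.Ioi (0:ℝ), p.eval (Real.exp (-t)) * u t
          = ∑ i ∈ Finset.range (p.natDegree + 1), p.coeff i * (Real.exp (-((i:ℝ)*t)) * u t) := by
        intro t _
        rw [Polynomial.eval_eq_sum_range, Finset.sum_mul]
        congr 1; ext i
        rw [← Real.exp_nat_mul]
        ring_nf
      rw [setIntegral_congr_fun measurableSet_Ioi this, integral_finset_sum _ (fun i _ => hint_each i)]
      apply Finset.sum_eq_zero
      intro i _
      rw [integral_const_mul, hmom i, mul_zero]
    -- main estimate
    have hmem01 : ∀ t : ℝ, 0 < t → Real.exp (-t) ∈ Set.Icc (0:ℝ) 1 := by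
      intro t ht
      constructor
      · positivity
      · rw [Real.exp_le_one_iff]; linarith
    have key : ∫ x : ℝ, ψ x • u x = ∫ t in Set.Ioi (0:ℝ), ψ t * u t := by
      rw [← setIntegral_eq_integral_of_forall_compl_eq_zero (s := Set.Ioi (0:ℝ))
        (fun t ht => by simp [hsupp t ht])]
      simp [smul_eq_mul]
    rw [key]
    -- approximation
    by_contra hne
    have habs : 0 < |∫ t in Set.Ioi (0:ℝ), ψ t * u t| := abs_pos.2 hne
    set Iu : ℝ := ∫ t in Set.Ioi (0:ℝ), |u t|
    have hIu : 0 ≤ Iu := by positivity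
    -- choose ε
    set ε : ℝ := |∫ t in Set.Ioi (0:ℝ), ψ t * u t| / (2 * (Iu + 1)) with hε
    have hεpos : 0 < ε := by positivity
    -- Weierstrass
    have hclosure : (Θ : C(Set.Icc (0:ℝ) 1, ℝ)) ∈
        (polynomialFunctions (Set.Icc (0:ℝ) 1)).topologicalClosure := by
      rw [polynomialFunctions_closure_eq_top]; trivial
    have hclosure' : (Θ : C(Set.Icc (0:ℝ) 1, ℝ)) ∈
        closure (polynomialFunctions (Set.Icc (0:ℝ) 1) : Set C(Set.Icc (0:ℝ) 1, ℝ)) := by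
      rw [← Subalgebra.topologicalClosure_coe]
      exact hclosure
    obtain ⟨pc, hpcmem, hpcdist⟩ := Metric.mem_closure_iff.1 hclosure' ε hεpos
    rw [polynomialFunctions_coe] at hpcmem
    obtain ⟨p, hp⟩ := hpcmem
    -- pointwise estimate for t > 0
    have hptwise : ∀ t ∈ Set.Ioi (0:ℝ),
        |ψ t * u t - p.eval (Real.exp (-t)) * u t| ≤ ε * |u t| := by
      intro t ht
      have hx : Real.exp (-t) ∈ Set.Icc (0:ℝ) 1 := hmem01 t ht
      have h1 : ψ t = Θ ⟨Real.exp (-t), hx⟩ := by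
        have hne : ¬ (Real.exp (-t) ≤ 0) := not_le.2 (Real.exp_pos _)
        simp [Θ, hΘ₀, hne, Real.log_exp]
      have h2 : p.eval (Real.exp (-t)) = pc ⟨Real.exp (-t), hx⟩ := by
        rw [← hp]
        rfl
      have h3 : dist (Θ ⟨Real.exp (-t), hx⟩) (pc ⟨Real.exp (-t), hx⟩) ≤ dist Θ pc :=
        ContinuousMap.dist_apply_le_dist _
      rw [← sub_mul, abs_mul]
      apply mul_le_mul_of_nonneg_right _ (abs_nonneg _)
      rw [h1, h2, ← Real.dist_eq]
      exact le_of_lt (lt_of_le_of_lt h3 hpcdist)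
    -- integrability facts
    obtain ⟨Kψ, hKψ⟩ := hψc.exists_bound_of_continuous hψ.continuous
    have hint1 : IntegrableOn (fun t => ψ t * u t) (Set.Ioi 0) := by
      refine Integrable.mono' (hu.restrict.abs.const_mul Kψ) ?_ ?_
      · exact hψ.continuous.aestronglyMeasurable.mul hu.aestronglyMeasurable.restrict
      · refine Filter.Eventually.of_forall (fun t => ?_)
        rw [Real.norm_eq_abs, abs_mul]
        exact mul_le_mul_of_nonneg_right (hKψ t) (abs_nonneg _)
    have hint2 : IntegrableOn (fun t => p.eval (Real.exp (-t)) * u t) (Set.Ioi 0) := by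
      refine Integrable.mono' (hu.restrict.abs.const_mul ‖pc‖) ?_ ?_
      · exact ((p.continuous_aeval.comp (by continuity)).aestronglyMeasurable).mul
          hu.aestronglyMeasurable.restrict
      · filter_upwards [ae_restrict_mem measurableSet_Ioi] with t ht
        rw [Real.norm_eq_abs, abs_mul]
        apply mul_le_mul_of_nonneg_right _ (abs_nonneg _)
        have hx : Real.exp (-t) ∈ Set.Icc (0:ℝ) 1 := hmem01 t ht
        have : p.eval (Real.exp (-t)) = pc ⟨Real.exp (-t), hx⟩ := by rw [← hp]; rfl
        rw [this, ← Real.norm_eq_abs]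
        exact ContinuousMap.norm_coe_le_norm pc _
    have heq : |∫ t in Set.Ioi (0:ℝ), ψ t * u t|
        = |∫ t in Set.Ioi (0:ℝ), (ψ t * u t - p.eval (Real.exp (-t)) * u t)| := by
      rw [integral_sub hint1 hint2, hpoly0 p, sub_zero]
    have hb : |∫ t in Set.Ioi (0:ℝ), (ψ t * u t - p.eval (Real.exp (-t)) * u t)|
        ≤ ε * Iu := by
      calc |∫ t in Set.Ioi (0:ℝ), (ψ t * u t - p.eval (Real.exp (-t)) * u t)|
          ≤ ∫ t in Set.Ioi (0:ℝ), |ψ t * u t - p.eval (Real.exp (-t)) * u t| := by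
            simpa [Real.norm_eq_abs] using
              norm_integral_le_integral_norm (μ := volume.restrict (Set.Ioi 0))
                (f := fun t => ψ t * u t - p.eval (Real.exp (-t)) * u t)
        _ ≤ ∫ t in Set.Ioi (0:ℝ), ε * |u t| := by
            refine setIntegral_mono_on ((hint1.sub hint2).abs) (hu.restrict.abs.const_mul ε)
              measurableSet_Ioi hptwise
        _ = ε * Iu := by rw [integral_const_mul]
    have hfin : |∫ t in Set.Ioi (0:ℝ), ψ t * u t| ≤ ε * Iu := heq ▸ hb
    have : ε * Iu < |∫ t in Set.Ioi (0:ℝ), ψ t * u t| := by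
      rw [hε]
      rw [div_mul_eq_mul_div, div_lt_iff₀ (by positivity)]
      nlinarith
    linarith
  exact ae_restrict_of_ae hglob


lemma stmt5_laplace {w : ℝ → ℝ} {σ b c : ℝ} (hσ : 0 < σ) (hσb : σ < b)
    (hInt : ∀ q : ℝ, σ < q → IntegrableOn (fun t => Real.exp (-(q*t)) * w t) (Set.Ioi 0))
    (hc : ∀ q ∈ Set.Ioo σ b, ∫ t in Set.Ioi (0:ℝ), Real.exp (-(q*t)) * w t = c) :
    ∀ᵐ t ∂(volume.restrict (Set.Ioi (0:ℝ))), w t = 0 := by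
  set μ := volume.restrict (Set.Ioi (0:ℝ)) with hμ
  have hwm : AEStronglyMeasurable w μ := by
    have h1 := (hInt ((σ+b)/2) (by linarith)).aestronglyMeasurable
    have h2 : AEStronglyMeasurable (fun t : ℝ => Real.exp (((σ+b)/2)*t)) μ :=
      (Real.continuous_exp.comp (continuous_const.mul continuous_id)).aestronglyMeasurable
    refine (h2.mul h1).congr (Filter.Eventually.of_forall (fun t => ?_))
    simp [← Real.exp_add, ← mul_assoc]
  have hnorm : ∀ (z : ℂ) (t : ℝ), ‖Complex.exp (-(z*t)) * (w t:ℂ)‖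
      = Real.exp (-(z.re*t)) * |w t| := by
    intro z t
    rw [norm_mul, Complex.norm_exp,
      Complex.norm_real, Real.norm_eq_abs]
    congr 2
    simp [Complex.mul_re]
  have hIntC : ∀ z : ℂ, σ < z.re →
      Integrable (fun t : ℝ => Complex.exp (-(z*t)) * (w t:ℂ)) μ := by
    intro z hz
    refine Integrable.mono' ((hInt z.re hz).abs) ?_ ?_
    · exact (Complex.continuous_exp.comp
        ((continuous_const.mul Complex.continuous_ofReal).neg)).aestronglyMeasurable.mul
        (Complex.continuous_ofReal.comp_aestronglyMeasurable hwm)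
    · refine Filter.Eventually.of_forall (fun t => ?_)
      rw [hnorm, abs_mul, Real.abs_exp]
  set Λ : ℂ → ℂ := fun z => ∫ t, Complex.exp (-(z*t)) * (w t:ℂ) ∂μ with hΛ
  have hreal : ∀ q : ℝ, σ < q →
      Λ (q:ℂ) = ((∫ t, Real.exp (-(q*t)) * w t ∂μ : ℝ) : ℂ) := by
    intro q hq
    rw [show Λ (q:ℂ) = ∫ t, Complex.exp (-((q:ℂ)*t)) * (w t:ℂ) ∂μ from rfl]
    rw [show (fun t : ℝ => Complex.exp (-((q:ℂ)*t)) * (w t:ℂ))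
        = fun t : ℝ => ((Real.exp (-(q*t)) * w t : ℝ) : ℂ) from ?_]
    · exact integral_ofReal
    · ext t
      simp [Complex.ofReal_exp]
  set U : Set ℂ := {z : ℂ | σ < z.re} with hU
  have hUopen : IsOpen U := isOpen_lt continuous_const Complex.continuous_re
  have hdiff : DifferentiableOn ℂ Λ U := by
    intro z0 hz0
    refine DifferentiableAt.differentiableWithinAt ?_
    have hz0re : σ < z0.re := hz0
    set ε : ℝ := (z0.re - σ)/4 with hε
    have hεpos : 0 < ε := by rw [hε]; linarith
    set σ' : ℝ := σ + ε with hσ'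
    have hσ'σ : σ < σ' := by rw [hσ']; linarith
    have key := hasDerivAt_integral_of_dominated_loc_of_deriv_le (μ := μ) (x₀ := z0)
      (s := Metric.ball z0 ε)
      (F := fun z (t : ℝ) => Complex.exp (-(z*t)) * (w t:ℂ))
      (F' := fun z (t : ℝ) => (-(t:ℂ)) * (Complex.exp (-(z*t)) * (w t:ℂ)))
      (bound := fun t => ε⁻¹ * |Real.exp (-(σ'*t)) * w t|)
      (Metric.ball_mem_nhds z0 hεpos)
      (Filter.Eventually.of_forall (fun z =>
        (Complex.continuous_exp.comp
          ((continuous_const.mul Complex.continuous_ofReal).neg)).aestronglyMeasurable.mul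
          (Complex.continuous_ofReal.comp_aestronglyMeasurable hwm)))
      (hIntC z0 hz0re)
      (((Complex.continuous_ofReal.neg).mul
        ((Complex.continuous_exp.comp
          ((continuous_const.mul Complex.continuous_ofReal).neg)))).aestronglyMeasurable.mul
          (Complex.continuous_ofReal.comp_aestronglyMeasurable hwm) |>.congr
          (Filter.Eventually.of_forall (fun t => by simp [Function.comp]; ring)))
      ?_ (((hInt σ' hσ'σ).abs).const_mul ε⁻¹) ?_
    · exact key.2.differentiableAt
    · -- h_bound
      filter_upwards [ae_restrict_mem measurableSet_Ioi] with t ht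
      intro z hzball
      have hre : z0.re - ε ≤ z.re := by
        have h1 : |(z - z0).re| ≤ ‖z - z0‖ := Complex.abs_re_le_norm _
        have h2 : ‖z - z0‖ < ε := by
          rw [← dist_eq_norm]
          exact Metric.mem_ball.1 hzball
        have := abs_le.1 h1
        simp only [Complex.sub_re] at this
        linarith [this.1, h2]
      have ht0 : (0:ℝ) < t := ht
      rw [norm_mul, hnorm]
      have hnt : ‖(-(t:ℂ))‖ = t := by
        rw [norm_neg, Complex.norm_real, Real.norm_eq_abs, abs_of_pos ht0]
      rw [hnt, abs_mul, Real.abs_exp]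
      have hte : t * Real.exp (-(ε*t)) ≤ ε⁻¹ := by
        have h1 : ε*t ≤ Real.exp (ε*t) := by linarith [Real.add_one_le_exp (ε*t)]
        rw [Real.exp_neg]
        rw [mul_inv_le_iff₀ (Real.exp_pos _)]
        calc t = (ε*t)/ε := by field_simp
          _ ≤ Real.exp (ε*t)/ε := by gcongr
          _ = ε⁻¹ * Real.exp (ε*t) := by ring
      have hkey : t * Real.exp (-(z.re*t)) ≤ ε⁻¹ * Real.exp (-(σ'*t)) := by
        have hsplit : Real.exp (-(z.re*t)) ≤ Real.exp (-((σ' + ε)*t)) := by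
          apply Real.exp_le_exp.2
          have : σ' + ε ≤ z.re := by rw [hσ', hε]; linarith
          nlinarith
        calc t * Real.exp (-(z.re*t)) ≤ t * Real.exp (-((σ' + ε)*t)) :=
              mul_le_mul_of_nonneg_left hsplit ht0.le
          _ = (t * Real.exp (-(ε*t))) * Real.exp (-(σ'*t)) := by
              rw [mul_assoc, ← Real.exp_add]; ring_nf
          _ ≤ ε⁻¹ * Real.exp (-(σ'*t)) :=
              mul_le_mul_of_nonneg_right hte (Real.exp_nonneg _)
      calc t * (Real.exp (-(z.re*t)) * |w t|) = (t * Real.exp (-(z.re*t))) * |w t| := by ring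
        _ ≤ (ε⁻¹ * Real.exp (-(σ'*t))) * |w t| := mul_le_mul_of_nonneg_right hkey (abs_nonneg _)
        _ = ε⁻¹ * (Real.exp (-(σ'*t)) * |w t|) := by ring
    · refine Filter.Eventually.of_forall (fun t => fun z _ => ?_)
      have hinner : HasDerivAt (fun z : ℂ => -(z * t)) (-(t:ℂ)) z := by
        exact ((hasDerivAt_id z).mul_const (t:ℂ)).neg.congr_deriv (by simp)
      have h2 := (hinner.cexp).mul_const (w t : ℂ)
      exact h2.congr_deriv (by ring)
  -- identity theorem
  have han : AnalyticOnNhd ℂ Λ U := hdiff.analyticOnNhd hUopen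
  have hpre : IsPreconnected U := (convex_halfSpace_re_gt σ).isPreconnected
  have hz0mem : (((σ+b)/2 : ℝ) : ℂ) ∈ U := by
    simp only [hU, Set.mem_setOf_eq, Complex.ofReal_re]; linarith
  have hΛval : ∀ q : ℝ, q ∈ Set.Ioo σ b → Λ (q:ℂ) = ((c:ℝ):ℂ) := by
    intro q hq
    rw [hreal q hq.1, hc q hq]
  have hfreq : ∃ᶠ z in nhdsWithin (((σ+b)/2 : ℝ) : ℂ) {(((σ+b)/2 : ℝ) : ℂ)}ᶜ,
      Λ z = ((c:ℝ):ℂ) := by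
    set ζ : ℕ → ℂ := fun j => (((σ+b)/2 + (b-σ)/(4*((j:ℝ)+1)) : ℝ) : ℂ) with hζ
    have hmem : ∀ j : ℕ, ((σ+b)/2 + (b-σ)/(4*((j:ℝ)+1))) ∈ Set.Ioo σ b := by
      intro j
      have hj1 : (0:ℝ) < (j:ℝ) + 1 := by positivity
      constructor
      · have : 0 < (b-σ)/(4*((j:ℝ)+1)) := div_pos (by linarith) (by positivity)
        linarith
      · have h1 : (b-σ)/(4*((j:ℝ)+1)) ≤ (b-σ)/4 := by
          gcongr
          · linarith
        linarith
    have h0 : Tendsto (fun j : ℕ => (b-σ)/(4*((j:ℝ)+1))) atTop (nhds 0) := by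
      have heq : (fun j : ℕ => (b-σ)/(4*((j:ℝ)+1)))
          = fun j : ℕ => ((b-σ)/4) * (1/((j:ℝ)+1)) := by
        ext j
        have hj : ((j:ℝ)+1) ≠ 0 := by positivity
        field_simp
      rw [heq]
      simpa using tendsto_one_div_add_atTop_nhds_zero_nat.const_mul ((b-σ)/4)
    have htr : Tendsto (fun j : ℕ => (σ+b)/2 + (b-σ)/(4*((j:ℝ)+1))) atTop
        (nhds ((σ+b)/2)) := by
      simpa using tendsto_const_nhds.add h0
    have htend : Tendsto ζ atTop
        (nhdsWithin (((σ+b)/2 : ℝ) : ℂ) {(((σ+b)/2 : ℝ) : ℂ)}ᶜ) := by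
      apply tendsto_nhdsWithin_of_tendsto_nhds_of_eventually_within
      · exact (Complex.continuous_ofReal.tendsto _).comp htr
      · apply Filter.Eventually.of_forall
        intro j
        have hj1 : (0:ℝ) < (j:ℝ) + 1 := by positivity
        have : (0:ℝ) < (b-σ)/(4*((j:ℝ)+1)) := div_pos (by linarith) (by positivity)
        simp only [hζ, Set.mem_compl_iff, Set.mem_singleton_iff, Complex.ofReal_inj]
        intro hcon
        linarith
    exact htend.frequently (Frequently.of_forall (fun j => hΛval _ (hmem j)))
  have heqOn : Set.EqOn Λ (fun _ => ((c:ℝ):ℂ)) U :=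
    han.eqOn_of_preconnected_of_frequently_eq analyticOnNhd_const hpre hz0mem hfreq
  -- c = 0 via decay at infinity
  have hc0 : c = 0 := by
    have hval : ∀ j : ℕ, Λ (((b + (j:ℝ)) : ℝ) : ℂ) = ((c:ℝ):ℂ) := by
      intro j
      apply heqOn
      simp only [hU, Set.mem_setOf_eq, Complex.ofReal_re]
      have : (0:ℝ) ≤ (j:ℝ) := Nat.cast_nonneg j
      linarith
    have htend0 : Tendsto (fun j : ℕ => Λ (((b + (j:ℝ)) : ℝ) : ℂ)) atTop (nhds 0) := by
      have h := MeasureTheory.tendsto_integral_of_dominated_convergence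
        (μ := μ)
        (F := fun (j : ℕ) (t : ℝ) => Complex.exp (-(((b + (j:ℝ) : ℝ):ℂ)*t)) * (w t:ℂ))
        (f := fun _ => (0:ℂ))
        (bound := fun t => |Real.exp (-(((σ+b)/2)*t)) * w t|)
        (fun j => (hIntC (((b + (j:ℝ)) : ℝ) : ℂ) (by
          simp only [Complex.ofReal_re]
          have : (0:ℝ) ≤ (j:ℝ) := Nat.cast_nonneg j
          linarith)).aestronglyMeasurable)
        ((hInt ((σ+b)/2) (by linarith)).abs)
        ?_ ?_
      · simpa using h
      · intro j
        filter_upwards [ae_restrict_mem measurableSet_Ioi] with t ht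
        have ht0 : (0:ℝ) < t := ht
        rw [hnorm, abs_mul, Real.abs_exp]
        apply mul_le_mul_of_nonneg_right _ (abs_nonneg _)
        apply Real.exp_le_exp.2
        simp only [Complex.ofReal_re]
        have : (0:ℝ) ≤ (j:ℝ) := Nat.cast_nonneg j
        nlinarith
      · filter_upwards [ae_restrict_mem measurableSet_Ioi] with t ht
        have ht0 : (0:ℝ) < t := ht
        apply squeeze_zero_norm (a := fun j : ℕ => (Real.exp (-(b*t)) * |w t|) * (Real.exp (-t))^j)
        · intro j
          rw [hnorm]
          apply le_of_eq
          rw [← Real.exp_nat_mul, mul_assoc, mul_comm (|w t|), ← mul_assoc, ← Real.exp_add]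
          congr 2
          simp only [Complex.ofReal_re]
          ring
        · have hgeo : Tendsto (fun j : ℕ => (Real.exp (-t))^j) atTop (nhds 0) := by
            apply tendsto_pow_atTop_nhds_zero_of_lt_one (Real.exp_nonneg _)
            rw [Real.exp_lt_one_iff]
            linarith
          simpa using hgeo.const_mul (Real.exp (-(b*t)) * |w t|)
    rw [tendsto_congr hval] at htend0
    have := tendsto_nhds_unique htend0 tendsto_const_nhds
    exact_mod_cast this.symm
  -- moments
  set k0 : ℕ := ⌈σ⌉₊ + 1 with hk0def
  have hk0 : σ < (k0:ℝ) := by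
    calc σ ≤ (⌈σ⌉₊ : ℝ) := Nat.le_ceil σ
      _ < (k0:ℝ) := by
          rw [hk0def]
          push_cast
          linarith
  have hmomk : ∀ r : ℝ, σ < r → ∫ t, Real.exp (-(r * t)) * w t ∂μ = 0 := by
    intro r hr
    have hz : ((r:ℝ):ℂ) ∈ U := by simp only [hU, Set.mem_setOf_eq, Complex.ofReal_re]; exact hr
    have h1 := heqOn hz
    rw [hreal r hr, hc0] at h1
    simpa using h1
  set u : ℝ → ℝ := Set.indicator (Set.Ioi (0:ℝ)) (fun t => Real.exp (-((k0:ℝ)*t)) * w t)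
    with hudef
  have hu : Integrable u := (hInt (k0:ℝ) hk0).integrable_indicator measurableSet_Ioi
  have husupp : ∀ t, t ∉ Set.Ioi (0:ℝ) → u t = 0 := fun t ht => Set.indicator_of_notMem ht _
  have humom : ∀ j : ℕ, ∫ t in Set.Ioi (0:ℝ), Real.exp (-((j:ℝ)*t)) * u t = 0 := by
    intro j
    have heqf : ∀ t ∈ Set.Ioi (0:ℝ), Real.exp (-((j:ℝ)*t)) * u t
        = Real.exp (-(((k0:ℝ) + (j:ℝ)) * t)) * w t := by
      intro t ht
      rw [hudef, Set.indicator_of_mem ht, ← mul_assoc, ← Real.exp_add]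
      congr 2
      ring
    rw [setIntegral_congr_fun measurableSet_Ioi heqf]
    exact hmomk _ (by linarith [Nat.cast_nonneg (α := ℝ) j])
  have hu0 := stmt5_moments hu husupp humom
  filter_upwards [hu0, ae_restrict_mem measurableSet_Ioi] with t h1 h2
  rw [hudef, Set.indicator_of_mem h2] at h1
  rcases mul_eq_zero.1 h1 with h | h
  · exact absurd h (Real.exp_ne_zero _)
  · exact h

set_option maxHeartbeats 2000000 in
theorem stmt5 (f : ℕ → ℝ → ℝ) (finf : ℝ → ℝ)
    (hpos : ∀ n t, 0 < t → 0 < f n t) (hposinf : ∀ t, 0 < t → 0 < finf t)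
    (hanti : ∀ n, AntitoneOn (f n) (Set.Ioi 0)) (hantiinf : AntitoneOn finf (Set.Ioi 0))
    (a b : ℝ) (ha : 0 < a) (hab : a < b)
    (hint : ∀ q ∈ Set.Ioo a b,
      IntegrableOn (fun t => Real.exp (-(q * t)) * finf t) (Set.Ioi 0))
    (hconv : ∀ q ∈ Set.Ioo a b,
      Tendsto (fun n => ∫ t in Set.Ioi (0:ℝ), Real.exp (-(q * t)) * f n t) atTop
        (nhds (∫ t in Set.Ioi (0:ℝ), Real.exp (-(q * t)) * finf t))) :
    ∀ t : ℝ, 0 < t → ContinuousWithinAt finf (Set.Ioi 0) t →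
      Tendsto (fun n => f n t) atTop (nhds (finf t)) := by
  intro t0 ht0 hcontW
  have hcontAt : ContinuousAt finf t0 := hcontW.continuousAt (Ioi_mem_nhds ht0)
  set q1 : ℝ := a + (b-a)/4 with hq1def
  set q2 : ℝ := a + (b-a)/2 with hq2def
  set q3 : ℝ := a + 3*(b-a)/4 with hq3def
  have hq1ab : q1 ∈ Set.Ioo a b := by constructor <;> (rw [hq1def]; linarith)
  have hq2ab : q2 ∈ Set.Ioo a b := by constructor <;> (rw [hq2def]; linarith)
  have hq3ab : q3 ∈ Set.Ioo a b := by constructor <;> (rw [hq3def]; linarith)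
  have hq1pos : 0 < q1 := by rw [hq1def]; linarith
  have hq12 : q1 < q2 := by rw [hq1def, hq2def]; linarith
  have hq23 : q2 < q3 := by rw [hq2def, hq3def]; linarith
  set F : ℝ → ℝ := fun q => ∫ t in Set.Ioi (0:ℝ), Real.exp (-(q*t)) * finf t with hFdef
  -- measurability of the f n and finf
  have hfm : ∀ n, AEStronglyMeasurable (f n) (volume.restrict (Set.Ioi (0:ℝ))) :=
    fun n => (stmt5_aemeas (hanti n)).aestronglyMeasurable
  have hfinfm : AEStronglyMeasurable finf (volume.restrict (Set.Ioi (0:ℝ))) :=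
    (stmt5_aemeas hantiinf).aestronglyMeasurable
  -- positivity of F q1
  have hFpos : ∀ q ∈ Set.Ioo a b, 0 < F q := by
    intro q hq
    rw [hFdef]
    rw [setIntegral_pos_iff_support_of_nonneg_ae]
    · have : Set.Ioi (0:ℝ) ⊆ Function.support (fun t => Real.exp (-(q*t)) * finf t)
          ∩ Set.Ioi 0 := by
        intro t ht
        refine ⟨?_, ht⟩
        simp only [Function.mem_support]
        exact ne_of_gt (mul_pos (Real.exp_pos _) (hposinf t ht))
      have h1 : (0:ℝ≥0∞) < volume (Set.Ioi (0:ℝ)) := by simp [Real.volume_Ioi]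
      exact lt_of_lt_of_le h1 (measure_mono this)
    · filter_upwards [ae_restrict_mem measurableSet_Ioi] with t ht
      exact le_of_lt (mul_pos (Real.exp_pos _) (hposinf t ht))
    · exact hint q hq
  -- main subsequence argument
  apply tendsto_of_subseq_tendsto
  intro ns hns
  have hconv1 : Tendsto (fun j => ∫ t in Set.Ioi (0:ℝ), Real.exp (-(q1*t)) * f (ns j) t)
      atTop (nhds (F q1)) := (hconv q1 hq1ab).comp hns
  obtain ⟨N, hN⟩ : ∃ N, ∀ j ≥ N,
      0 < ∫ t in Set.Ioi (0:ℝ), Real.exp (-(q1*t)) * f (ns j) t :=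
    eventually_atTop.1 (hconv1.eventually (eventually_gt_nhds (hFpos q1 hq1ab)))
  set e : ℕ → ℕ := fun j => ns (j + N) with hedef
  have hintf1 : ∀ j, IntegrableOn (fun t => Real.exp (-(q1*t)) * f (e j) t) (Set.Ioi 0) := by
    intro j
    by_contra hcon
    have h0 := MeasureTheory.integral_undef (fun h => hcon h)
    have := hN (j + N) (Nat.le_add_left N j)
    rw [h0] at this
    exact lt_irrefl 0 this
  have hintf : ∀ j (q : ℝ), q1 ≤ q →
      IntegrableOn (fun t => Real.exp (-(q*t)) * f (e j) t) (Set.Ioi 0) := by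
    intro j q hq
    refine Integrable.mono' ((hintf1 j).abs) ?_ ?_
    · exact ((Real.continuous_exp.comp (continuous_const.mul continuous_id).neg).aestronglyMeasurable).mul (hfm (e j))
    · filter_upwards [ae_restrict_mem measurableSet_Ioi] with t ht
      have ht0 : (0:ℝ) < t := ht
      rw [Real.norm_eq_abs, abs_mul, Real.abs_exp, abs_mul, Real.abs_exp]
      apply mul_le_mul_of_nonneg_right _ (abs_nonneg _)
      apply Real.exp_le_exp.2
      nlinarith
  have hconve : ∀ q ∈ Set.Ioo a b,
      Tendsto (fun j => ∫ t in Set.Ioi (0:ℝ), Real.exp (-(q*t)) * f (e j) t)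
        atTop (nhds (F q)) := by
    intro q hq
    exact ((hconv q hq).comp hns).comp (tendsto_add_atTop_nat N)
  -- uniform bound
  obtain ⟨M, hM⟩ : ∃ M, ∀ j,
      (∫ t in Set.Ioi (0:ℝ), Real.exp (-(q1*t)) * f (e j) t) ≤ M := by
    have := (hconve q1 hq1ab).bddAbove_range
    obtain ⟨M, hM⟩ := this
    exact ⟨M, fun j => hM (Set.mem_range_self j)⟩
  set C : ℝ → ℝ := fun t => q1 * M / (1 - Real.exp (-(q1*t))) with hCdef
  have hCbound : ∀ j (t : ℝ), 0 < t → f (e j) t ∈ Set.Icc 0 (C t) := by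
    intro j t ht
    refine ⟨(hpos _ t ht).le, ?_⟩
    exact stmt5_bound (fun s hs => (hpos _ s hs).le) (hanti _) hq1pos (hintf1 j) (hM j) ht
  obtain ⟨φs, hφs, L, hL⟩ := stmt5_helly (C := C) (h := fun j t => f (e j) t)
    (fun k q hq => hCbound k q (by exact_mod_cast hq))
  set h : ℕ → ℝ → ℝ := fun k => f (e (φs k)) with hhdef
  have hhanti : ∀ k, AntitoneOn (h k) (Set.Ioi 0) := fun k => hanti _
  have hhpos : ∀ k t, 0 < t → 0 < h k t := fun k t ht => hpos _ t ht
  have hLanti : ∀ p q : ℚ, 0 < p → p ≤ q → L q ≤ L p := by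
    intro p q hp hpq
    have hq : 0 < q := lt_of_lt_of_le hp hpq
    refine le_of_tendsto_of_tendsto' (hL q hq) (hL p hp) (fun k => ?_)
    refine hanti _ (Set.mem_Ioi.2 (by exact_mod_cast hp)) (Set.mem_Ioi.2 (by exact_mod_cast hq))
      (by exact_mod_cast hpq)
  have hLnonneg : ∀ q : ℚ, 0 < q → 0 ≤ L q := by
    intro q hq
    exact ge_of_tendsto' (hL q hq) (fun k => (hpos _ _ (by exact_mod_cast hq)).le)
  set g : ℝ → ℝ := fun t => sSup ((fun q : ℚ => L q) '' {q : ℚ | t < (q:ℝ)}) with hgdef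
  have hgne : ∀ t : ℝ, ((fun q : ℚ => L q) '' {q : ℚ | t < (q:ℝ)}).Nonempty := by
    intro t
    obtain ⟨q, hq⟩ := exists_rat_gt t
    exact ⟨L q, ⟨q, hq, rfl⟩⟩
  have hgbdd : ∀ t : ℝ, 0 < t → BddAbove ((fun q : ℚ => L q) '' {q : ℚ | t < (q:ℝ)}) := by
    intro t ht
    obtain ⟨p0, hp0, hp0t⟩ := exists_rat_btwn ht
    refine ⟨L p0, fun x hx => ?_⟩
    obtain ⟨q, hq, rfl⟩ := hx
    refine hLanti p0 q (by exact_mod_cast hp0) ?_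
    have : (p0:ℝ) ≤ (q:ℝ) := le_of_lt (lt_trans hp0t hq)
    exact_mod_cast this
  have hgle : ∀ (t : ℝ), 0 < t → ∀ q : ℚ, t < (q:ℝ) → L q ≤ g t :=
    fun t ht q hq => le_csSup (hgbdd t ht) ⟨q, hq, rfl⟩
  have hgge : ∀ (t : ℝ), 0 < t → ∀ p : ℚ, 0 < (p:ℝ) → (p:ℝ) ≤ t → g t ≤ L p := by
    intro t ht p hp hpt
    refine csSup_le (hgne t) ?_
    rintro x ⟨q, hq, rfl⟩
    refine hLanti p q (by exact_mod_cast hp) ?_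
    have : (p:ℝ) ≤ (q:ℝ) := le_of_lt (lt_of_le_of_lt hpt hq)
    exact_mod_cast this
  have hganti : AntitoneOn g (Set.Ioi 0) := by
    intro s hs t ht hst
    refine csSup_le (hgne t) ?_
    rintro x ⟨q, hq, rfl⟩
    exact hgle s hs q (lt_of_le_of_lt hst hq)
  have hgnonneg : ∀ t : ℝ, 0 < t → 0 ≤ g t := by
    intro t ht
    obtain ⟨q, hq⟩ := exists_rat_gt t
    have hq0 : (0:ℚ) < q := by exact_mod_cast lt_trans ht hq
    exact le_trans (hLnonneg q hq0) (hgle t ht q hq)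
  -- convergence of h k t at left-continuity points of g
  have hconvpt : ∀ t : ℝ, 0 < t →
      (∀ ε > 0, ∃ s, 0 < s ∧ s < t ∧ g s < g t + ε) →
      Tendsto (fun k => h k t) atTop (nhds (g t)) := by
    intro t ht hlc
    rw [Metric.tendsto_atTop]
    intro ε hε
    obtain ⟨s, hs0, hst, hgs⟩ := hlc (ε/2) (by linarith)
    obtain ⟨p, hsp, hpt⟩ := exists_rat_btwn hst
    have hp0 : (0:ℝ) < (p:ℝ) := lt_trans hs0 hsp
    have hLp : L p ≤ g s := hgle s hs0 p hsp
    obtain ⟨x, hxmem, hxgt⟩ := exists_lt_of_lt_csSup (hgne t)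
      (show g t - ε/2 < g t by linarith)
    obtain ⟨q, hq, rfl⟩ := hxmem
    have hq0 : (0:ℝ) < (q:ℝ) := lt_trans ht hq
    have hev1 : ∀ᶠ k in atTop, h k (p:ℝ) < L p + ε/2 :=
      (hL p (by exact_mod_cast hp0)).eventually (gt_mem_nhds (by linarith))
    have hev2 : ∀ᶠ k in atTop, g t - ε/2 < h k (q:ℝ) :=
      (hL q (by exact_mod_cast hq0)).eventually (lt_mem_nhds hxgt)
    obtain ⟨K, hK⟩ := eventually_atTop.1 (hev1.and hev2)
    refine ⟨K, fun k hk => ?_⟩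
    obtain ⟨hk1, hk2⟩ := hK k hk
    have hup : h k t ≤ h k (p:ℝ) := hhanti k hp0 (lt_trans hs0 hst) (le_of_lt hpt)
    have hdn : h k (q:ℝ) ≤ h k t := hhanti k (lt_trans hs0 hst) hq0 (le_of_lt hq)
    rw [Real.dist_eq, abs_sub_lt_iff]
    constructor <;> linarith
  -- a.e. convergence
  have hGanti : Antitone (fun x : ℝ => g (Real.exp x)) :=
    fun x y hxy => hganti (Real.exp_pos x) (Real.exp_pos y) (Real.exp_le_exp.2 hxy)
  have hDcnt : Set.Countable {x : ℝ | ¬ContinuousAt (fun x : ℝ => g (Real.exp x)) x} :=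
    hGanti.countable_not_continuousAt
  have haeconv : ∀ᵐ t ∂(volume.restrict (Set.Ioi (0:ℝ))),
      Tendsto (fun k => h k t) atTop (nhds (g t)) := by
    have hnull : volume (Real.exp ''
        {x : ℝ | ¬ContinuousAt (fun x : ℝ => g (Real.exp x)) x}) = 0 :=
      (hDcnt.image Real.exp).measure_zero volume
    have h1 : ∀ᵐ t ∂(volume : Measure ℝ), t ∉ Real.exp ''
        {x : ℝ | ¬ContinuousAt (fun x : ℝ => g (Real.exp x)) x} := by
      rw [ae_iff]
      simp only [not_not, Set.setOf_mem_eq]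
      exact hnull
    filter_upwards [ae_restrict_of_ae h1, ae_restrict_mem measurableSet_Ioi] with t hnm ht
    have ht' : (0:ℝ) < t := ht
    refine hconvpt t ht' ?_
    intro ε hε
    have hlogt : ContinuousAt (fun x : ℝ => g (Real.exp x)) (Real.log t) := by
      by_contra hcon
      exact hnm ⟨Real.log t, hcon, Real.exp_log ht'⟩
    obtain ⟨δ, hδ0, hδ⟩ := Metric.continuousAt_iff.1 hlogt ε hε
    refine ⟨Real.exp (Real.log t - δ/2), Real.exp_pos _, ?_, ?_⟩
    · nth_rewrite 2 [← Real.exp_log ht']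
      exact Real.exp_lt_exp.2 (by linarith)
    · have hd : dist (Real.log t - δ/2) (Real.log t) < δ := by
        rw [Real.dist_eq]
        rw [show Real.log t - δ/2 - Real.log t = -(δ/2) by ring, abs_neg,
          abs_of_pos (by linarith)]
        linarith
      have h3 := hδ hd
      rw [Real.dist_eq] at h3
      have h4 := (abs_sub_lt_iff.1 h3).1
      rw [Real.exp_log ht'] at h4
      linarith
  -- Stage 3
  have hinth : ∀ k (q : ℝ), q1 ≤ q →
      IntegrableOn (fun t => Real.exp (-(q*t)) * h k t) (Set.Ioi 0) :=
    fun k q hq => hintf (φs k) q hq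
  have hconvh : ∀ q ∈ Set.Ioo a b,
      Tendsto (fun k => ∫ t in Set.Ioi (0:ℝ), Real.exp (-(q*t)) * h k t) atTop
        (nhds (F q)) :=
    fun q hq => (hconve q hq).comp (hφs.tendsto_atTop)
  have hgm : AEStronglyMeasurable g (volume.restrict (Set.Ioi (0:ℝ))) :=
    (stmt5_aemeas hganti).aestronglyMeasurable
  have hGfatou : ∀ q ∈ Set.Ioo q1 b,
      IntegrableOn (fun t => Real.exp (-(q*t)) * g t) (Set.Ioi 0) ∧
      (∫ t in Set.Ioi (0:ℝ), Real.exp (-(q*t)) * g t) ≤ F q := by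
    intro q hq
    have hqab : q ∈ Set.Ioo a b := ⟨lt_trans hq1ab.1 hq.1, hq.2⟩
    have hmeas : AEStronglyMeasurable (fun t => Real.exp (-(q*t)) * g t)
        (volume.restrict (Set.Ioi (0:ℝ))) :=
      ((Real.continuous_exp.comp
        (continuous_const.mul continuous_id).neg).aestronglyMeasurable).mul hgm
    have hnn : 0 ≤ᵐ[volume.restrict (Set.Ioi (0:ℝ))] (fun t => Real.exp (-(q*t)) * g t) := by
      filter_upwards [ae_restrict_mem measurableSet_Ioi] with t ht
      exact mul_nonneg (Real.exp_nonneg _) (hgnonneg t ht)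
    have hlreq : ∀ k, ENNReal.ofReal (∫ t in Set.Ioi (0:ℝ), Real.exp (-(q*t)) * h k t)
        = ∫⁻ t in Set.Ioi (0:ℝ), ENNReal.ofReal (Real.exp (-(q*t)) * h k t) := by
      intro k
      refine ofReal_integral_eq_lintegral_ofReal (hinth k q hq.1.le) ?_
      filter_upwards [ae_restrict_mem measurableSet_Ioi] with t ht
      exact mul_nonneg (Real.exp_nonneg _) (hhpos k t ht).le
    have hlim2 : Tendsto (fun k => ∫⁻ t in Set.Ioi (0:ℝ),
        ENNReal.ofReal (Real.exp (-(q*t)) * h k t)) atTop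
        (nhds (ENNReal.ofReal (F q))) := by
      refine (tendsto_congr (fun k => (hlreq k))).1 ?_
      exact (ENNReal.continuous_ofReal.tendsto _).comp (hconvh q hqab)
    have hliminf : (∫⁻ t in Set.Ioi (0:ℝ), ENNReal.ofReal (Real.exp (-(q*t)) * g t))
        ≤ ENNReal.ofReal (F q) := by
      have hfatou := lintegral_liminf_le' (μ := volume.restrict (Set.Ioi (0:ℝ))) (u := atTop)
        (f := fun k t => ENNReal.ofReal (Real.exp (-(q*t)) * h k t))
        (fun k => ((hinth k q hq.1.le).aestronglyMeasurable.aemeasurable).ennreal_ofReal)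
      have hae : (fun t => ENNReal.ofReal (Real.exp (-(q*t)) * g t))
          =ᵐ[volume.restrict (Set.Ioi (0:ℝ))]
          (fun t => Filter.liminf
            (fun k => ENNReal.ofReal (Real.exp (-(q*t)) * h k t)) atTop) := by
        filter_upwards [haeconv] with t htc
        have : Tendsto (fun k => ENNReal.ofReal (Real.exp (-(q*t)) * h k t)) atTop
            (nhds (ENNReal.ofReal (Real.exp (-(q*t)) * g t))) :=
          (ENNReal.continuous_ofReal.tendsto _).comp (htc.const_mul _)
        exact this.liminf_eq.symm
      rw [lintegral_congr_ae hae]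
      exact le_trans hfatou (le_of_eq hlim2.liminf_eq)
    have hfin : (∫⁻ t in Set.Ioi (0:ℝ), ENNReal.ofReal (Real.exp (-(q*t)) * g t)) < ⊤ :=
      lt_of_le_of_lt hliminf ENNReal.ofReal_lt_top
    have hint_g : IntegrableOn (fun t => Real.exp (-(q*t)) * g t) (Set.Ioi 0) := by
      refine ⟨hmeas, ?_⟩
      rw [hasFiniteIntegral_iff_ofReal hnn]
      exact hfin
    refine ⟨hint_g, ?_⟩
    rw [integral_eq_lintegral_of_nonneg_ae hnn hmeas]
    have hFnn : 0 ≤ F q := le_of_lt (hFpos q hqab)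
    calc (∫⁻ t in Set.Ioi (0:ℝ), ENNReal.ofReal (Real.exp (-(q*t)) * g t)).toReal
        ≤ (ENNReal.ofReal (F q)).toReal :=
          ENNReal.toReal_mono (by simp) hliminf
      _ = F q := ENNReal.toReal_ofReal hFnn
  -- monotonicity of C and positivity of M
  have hMpos : 0 < M := lt_of_lt_of_le (hN (0+N) (Nat.le_add_left N 0)) (hM 0)
  have hCanti : ∀ δ t : ℝ, 0 < δ → δ ≤ t → C t ≤ C δ := by
    intro δ t hδ hδt
    have ht0 : 0 < t := lt_of_lt_of_le hδ hδt
    have h2 : 0 < 1 - Real.exp (-(q1*δ)) := by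
      have : Real.exp (-(q1*δ)) < 1 := by rw [Real.exp_lt_one_iff]; nlinarith
      linarith
    have h1 : Real.exp (-(q1*t)) ≤ Real.exp (-(q1*δ)) := Real.exp_le_exp.2 (by nlinarith)
    have hq1M : 0 ≤ q1 * M := by positivity
    show q1 * M / (1 - Real.exp (-(q1*t))) ≤ q1 * M / (1 - Real.exp (-(q1*δ)))
    exact div_le_div_of_nonneg_left hq1M h2 (by linarith)
  -- dominated convergence on tails
  have hDCT : ∀ q δ : ℝ, q1 < q → 0 < δ →
      Tendsto (fun k => ∫ t in Set.Ioi δ, Real.exp (-(q*t)) * h k t) atTop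
        (nhds (∫ t in Set.Ioi δ, Real.exp (-(q*t)) * g t)) := by
    intro q δ hq hδ
    have hsub : Set.Ioi δ ⊆ Set.Ioi (0:ℝ) := Ioi_subset_Ioi hδ.le
    have hbint : Integrable (fun t => C δ * Real.exp (-(q*t)))
        (volume.restrict (Set.Ioi δ)) := by
      have h5 := (exp_neg_integrableOn_Ioi δ (lt_trans hq1pos hq)).const_mul (C δ)
      exact h5.congr (Filter.Eventually.of_forall (fun t => by ring_nf))
    refine tendsto_integral_of_dominated_convergence
      (bound := fun t => C δ * Real.exp (-(q*t)))
      (fun k => ((hinth k q hq.le).mono_set hsub).aestronglyMeasurable)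
      hbint
      ?_ ?_
    · intro k
      filter_upwards [ae_restrict_mem measurableSet_Ioi] with t ht
      have htδ : δ < t := ht
      have ht0 : (0:ℝ) < t := lt_trans hδ htδ
      rw [Real.norm_eq_abs, abs_mul, Real.abs_exp, abs_of_nonneg (hhpos k t ht0).le]
      have hb := (hCbound (φs k) t ht0).2
      have hb2 := hCanti δ t hδ htδ.le
      calc Real.exp (-(q*t)) * h k t ≤ Real.exp (-(q*t)) * C δ :=
            mul_le_mul_of_nonneg_left (le_trans hb hb2) (Real.exp_nonneg _)
        _ = C δ * Real.exp (-(q*t)) := mul_comm _ _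
    · filter_upwards [ae_restrict_of_ae_restrict_of_subset hsub haeconv] with t htc
      exact htc.const_mul _
  -- splitting
  have hsplit : ∀ (v : ℝ → ℝ) (δ : ℝ), 0 < δ → IntegrableOn v (Set.Ioi 0) →
      (∫ t in Set.Ioi (0:ℝ), v t)
        = (∫ t in Set.Ioc (0:ℝ) δ, v t) + ∫ t in Set.Ioi δ, v t := by
    intro v δ hδ hv
    rw [← setIntegral_union (Set.Ioc_disjoint_Ioi (le_refl δ)) measurableSet_Ioi
      (hv.mono_set Set.Ioc_subset_Ioi_self) (hv.mono_set (Ioi_subset_Ioi hδ.le)),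
      Set.Ioc_union_Ioi_eq_Ioi hδ.le]
  set G : ℝ → ℝ := fun q => ∫ t in Set.Ioi (0:ℝ), Real.exp (-(q*t)) * g t with hGdef
  -- head integrals tendsto
  have hhead : ∀ q δ : ℝ, q ∈ Set.Ioo q1 b → 0 < δ →
      Tendsto (fun k => ∫ t in Set.Ioc (0:ℝ) δ, Real.exp (-(q*t)) * h k t) atTop
        (nhds (F q - ∫ t in Set.Ioi δ, Real.exp (-(q*t)) * g t)) := by
    intro q δ hq hδ
    have h1 := hconvh q ⟨lt_trans hq1ab.1 hq.1, hq.2⟩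
    have h3 := h1.sub (hDCT q δ hq.1 hδ)
    refine h3.congr (fun k => ?_)
    rw [hsplit _ δ hδ (hinth k q hq.1.le)]
    ring
  -- tail of g tendsto G q along δ_j = 1/(j+1)
  have hgtail : ∀ q : ℝ, q ∈ Set.Ioo q1 b →
      Tendsto (fun j : ℕ => ∫ t in Set.Ioi ((1:ℝ)/(j+1)), Real.exp (-(q*t)) * g t)
        atTop (nhds (G q)) := by
    intro q hq
    have hmono : Monotone (fun j : ℕ => Set.Ioi ((1:ℝ)/((j:ℝ)+1))) := by
      intro i j hij
      apply Ioi_subset_Ioi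
      have h1 : ((i:ℝ)+1) ≤ ((j:ℝ)+1) := by exact_mod_cast Nat.succ_le_succ hij
      have h2 : (0:ℝ) < (i:ℝ)+1 := by positivity
      exact div_le_div_of_nonneg_left (by norm_num) h2 h1
    have hunion : (⋃ j : ℕ, Set.Ioi ((1:ℝ)/((j:ℝ)+1))) = Set.Ioi (0:ℝ) := by
      ext t
      simp only [Set.mem_iUnion, Set.mem_Ioi]
      constructor
      · rintro ⟨j, hj⟩
        have : (0:ℝ) < 1/((j:ℝ)+1) := by positivity
        linarith
      · intro ht
        obtain ⟨j, hj⟩ := exists_nat_one_div_lt ht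
        exact ⟨j, hj⟩
    have hfi : IntegrableOn (fun t => Real.exp (-(q*t)) * g t)
        (⋃ j : ℕ, Set.Ioi ((1:ℝ)/((j:ℝ)+1))) := by
      rw [hunion]; exact (hGfatou q hq).1
    have := tendsto_setIntegral_of_monotone (fun j => measurableSet_Ioi) hmono hfi
    rw [hunion] at this
    exact this
  -- D is constant on Ioo q1 b
  have hheadineq : ∀ q q' : ℝ, q1 < q' → q' ≤ q → ∀ δ : ℝ, 0 < δ → ∀ k,
      (∫ t in Set.Ioc (0:ℝ) δ, Real.exp (-(q*t)) * h k t)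
        ≤ (∫ t in Set.Ioc (0:ℝ) δ, Real.exp (-(q'*t)) * h k t)
      ∧ (∫ t in Set.Ioc (0:ℝ) δ, Real.exp (-(q'*t)) * h k t)
        ≤ Real.exp ((q - q')*δ) * ∫ t in Set.Ioc (0:ℝ) δ, Real.exp (-(q*t)) * h k t := by
    intro q q' hq' hq'q δ hδ k
    have hIq : IntegrableOn (fun t => Real.exp (-(q*t)) * h k t) (Set.Ioc 0 δ) :=
      (hinth k q (le_trans hq'.le hq'q)).mono_set Set.Ioc_subset_Ioi_self
    have hIq' : IntegrableOn (fun t => Real.exp (-(q'*t)) * h k t) (Set.Ioc 0 δ) :=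
      (hinth k q' hq'.le).mono_set Set.Ioc_subset_Ioi_self
    constructor
    · refine setIntegral_mono_on hIq hIq' measurableSet_Ioc (fun t ht => ?_)
      have ht0 : 0 < t := ht.1
      apply mul_le_mul_of_nonneg_right _ (hhpos k t ht0).le
      apply Real.exp_le_exp.2
      nlinarith
    · rw [← integral_const_mul]
      refine setIntegral_mono_on hIq' (hIq.const_mul _) measurableSet_Ioc (fun t ht => ?_)
      have ht0 : 0 < t := ht.1
      rw [← mul_assoc, ← Real.exp_add]
      apply mul_le_mul_of_nonneg_right _ (hhpos k t ht0).le
      apply Real.exp_le_exp.2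
      nlinarith [ht.2]
  have hDconst : ∀ q q' : ℝ, q' ∈ Set.Ioo q1 b → q ∈ Set.Ioo q1 b → q' ≤ q →
      F q - G q = F q' - G q' := by
    intro q q' hq' hq hq'q
    -- limits along k of head integrals at δ
    have hA : ∀ δ : ℝ, 0 < δ →
        (F q - ∫ t in Set.Ioi δ, Real.exp (-(q*t)) * g t)
          ≤ (F q' - ∫ t in Set.Ioi δ, Real.exp (-(q'*t)) * g t)
        ∧ (F q' - ∫ t in Set.Ioi δ, Real.exp (-(q'*t)) * g t)
          ≤ Real.exp ((q - q')*δ)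
            * (F q - ∫ t in Set.Ioi δ, Real.exp (-(q*t)) * g t) := by
      intro δ hδ
      constructor
      · exact le_of_tendsto_of_tendsto' (hhead q δ hq hδ) (hhead q' δ hq' hδ)
          (fun k => (hheadineq q q' hq'.1 hq'q δ hδ k).1)
      · exact le_of_tendsto_of_tendsto' (hhead q' δ hq' hδ)
          ((hhead q δ hq hδ).const_mul _)
          (fun k => (hheadineq q q' hq'.1 hq'q δ hδ k).2)
    -- now take δ_j = 1/(j+1) → 0
    have hδj : ∀ j : ℕ, (0:ℝ) < 1/((j:ℝ)+1) := fun j => by positivity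
    have ht1 : Tendsto (fun j : ℕ => F q - ∫ t in Set.Ioi ((1:ℝ)/((j:ℝ)+1)),
        Real.exp (-(q*t)) * g t) atTop (nhds (F q - G q)) :=
      tendsto_const_nhds.sub (hgtail q hq)
    have ht2 : Tendsto (fun j : ℕ => F q' - ∫ t in Set.Ioi ((1:ℝ)/((j:ℝ)+1)),
        Real.exp (-(q'*t)) * g t) atTop (nhds (F q' - G q')) :=
      tendsto_const_nhds.sub (hgtail q' hq')
    have hexp : Tendsto (fun j : ℕ => Real.exp ((q - q')*((1:ℝ)/((j:ℝ)+1)))) atTop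
        (nhds 1) := by
      have h0 := tendsto_one_div_add_atTop_nhds_zero_nat.const_mul (q - q')
      rw [mul_zero] at h0
      have h1 := (Real.continuous_exp.tendsto 0).comp h0
      rw [Real.exp_zero] at h1
      exact h1.congr (fun j => by simp [Function.comp, mul_comm])
    have hle1 : F q - G q ≤ F q' - G q' :=
      le_of_tendsto_of_tendsto' ht1 ht2 (fun j => (hA _ (hδj j)).1)
    have hle2 : F q' - G q' ≤ F q - G q := by
      have h6 := le_of_tendsto_of_tendsto' ht2 (hexp.mul ht1) (fun j => (hA _ (hδj j)).2)
      rw [one_mul] at h6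
      exact h6
    linarith
  -- apply Laplace uniqueness to w = finf - g
  set w : ℝ → ℝ := fun t => finf t - g t with hwdef
  have hq3bb : q3 < b := hq3ab.2
  have hw_int_lt : ∀ q : ℝ, q1 < q → q < b →
      IntegrableOn (fun t => Real.exp (-(q*t)) * w t) (Set.Ioi 0) := by
    intro q hqa hqb
    have h1 := hint q ⟨lt_trans hq1ab.1 hqa, hqb⟩
    have h2 := (hGfatou q ⟨hqa, hqb⟩).1
    refine (h1.sub h2).congr (Filter.Eventually.of_forall (fun t => ?_))
    simp only [Pi.sub_apply]
    ring
  have hw_meas : AEStronglyMeasurable w (volume.restrict (Set.Ioi (0:ℝ))) :=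
    hfinfm.sub hgm
  have hw_int : ∀ q : ℝ, q2 < q →
      IntegrableOn (fun t => Real.exp (-(q*t)) * w t) (Set.Ioi 0) := by
    intro q hq
    rcases lt_or_ge q b with hqb | hqb
    · exact hw_int_lt q (lt_trans hq12 hq) hqb
    · have h3 := hw_int_lt q3 (lt_trans hq12 hq23) hq3bb
      refine Integrable.mono' h3.abs ?_ ?_
      · exact ((Real.continuous_exp.comp
          (continuous_const.mul continuous_id).neg).aestronglyMeasurable).mul hw_meas
      · filter_upwards [ae_restrict_mem measurableSet_Ioi] with t ht
        have ht0 : (0:ℝ) < t := ht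
        rw [Real.norm_eq_abs, abs_mul, Real.abs_exp, abs_mul, Real.abs_exp]
        apply mul_le_mul_of_nonneg_right _ (abs_nonneg _)
        apply Real.exp_le_exp.2
        nlinarith
  have hw_c : ∀ q ∈ Set.Ioo q2 b,
      ∫ t in Set.Ioi (0:ℝ), Real.exp (-(q*t)) * w t = F q2 - G q2 := by
    intro q hq
    have hq' : q ∈ Set.Ioo q1 b := ⟨lt_trans hq12 hq.1, hq.2⟩
    have hqab : q ∈ Set.Ioo a b := ⟨lt_trans hq1ab.1 hq'.1, hq.2⟩
    have heq1 : ∫ t in Set.Ioi (0:ℝ), Real.exp (-(q*t)) * w t = F q - G q := by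
      have h4 : (fun t : ℝ => Real.exp (-(q*t)) * w t)
          = fun t => Real.exp (-(q*t)) * finf t - Real.exp (-(q*t)) * g t := by
        ext t; rw [hwdef]; ring
      rw [h4, integral_sub (hint q hqab) (hGfatou q hq').1]
    rw [heq1]
    exact hDconst q q2 ⟨hq12, hq2ab.2⟩ hq' hq.1.le
  have hq2pos : 0 < q2 := by rw [hq2def]; linarith
  have hwae := stmt5_laplace hq2pos hq2ab.2 hw_int hw_c
  -- good points
  have hEae : ∀ᵐ t ∂(volume.restrict (Set.Ioi (0:ℝ))),
      (finf t = g t ∧ Tendsto (fun k => h k t) atTop (nhds (g t))) := by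
    filter_upwards [hwae, haeconv] with t h1 h2
    refine ⟨?_, h2⟩
    have : finf t - g t = 0 := h1
    linarith
  have hEdense : ∀ α β : ℝ, 0 ≤ α → α < β → ∃ s, α < s ∧ s < β ∧ 0 < s ∧
      finf s = g s ∧ Tendsto (fun k => h k s) atTop (nhds (g s)) := by
    intro α β hα hαβ
    by_contra hcon
    push_neg at hcon
    have hsub : Set.Ioo α β ⊆ {t | ¬(finf t = g t ∧
        Tendsto (fun k => h k t) atTop (nhds (g t)))} := by
      intro s hs
      intro hP
      have hs0 : 0 < s := lt_of_le_of_lt hα hs.1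
      obtain ⟨hP1, hP2⟩ := hP
      obtain h5 := hcon s hs.1 hs.2 hs0 hP1
      exact h5 hP2
    have hnull : (volume.restrict (Set.Ioi (0:ℝ))) {t | ¬(finf t = g t ∧
        Tendsto (fun k => h k t) atTop (nhds (g t)))} = 0 := by
      have h7 := hEae
      rw [ae_iff] at h7
      exact h7
    have hle : (volume.restrict (Set.Ioi (0:ℝ))) (Set.Ioo α β) = 0 := by
      exact le_antisymm (le_trans (measure_mono hsub) (le_of_eq hnull)) bot_le
    rw [Measure.restrict_apply measurableSet_Ioo] at hle
    have hIoosub : Set.Ioo α β ∩ Set.Ioi 0 = Set.Ioo α β := by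
      apply Set.inter_eq_left.2
      intro s hs
      exact lt_of_le_of_lt hα hs.1
    rw [hIoosub, Real.volume_Ioo] at hle
    have : (0:ℝ) < β - α := by linarith
    simp only [ENNReal.ofReal_eq_zero] at hle
    linarith
  -- final sandwich
  refine ⟨fun k => φs k + N, ?_⟩
  have hshow : (fun k => f (ns (φs k + N)) t0) = fun k => h k t0 := rfl
  show Tendsto (fun k => f (ns (φs k + N)) t0) atTop (nhds (finf t0))
  rw [hshow, Metric.tendsto_atTop]
  intro ε hε
  obtain ⟨δ, hδ0, hδ⟩ := Metric.continuousAt_iff.1 hcontAt (ε/2) (by linarith)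
  set δ' : ℝ := min (δ/2) (t0/2) with hδ'def
  have hδ'0 : 0 < δ' := lt_min (by linarith) (by linarith)
  have hδ'δ : δ' < δ := lt_of_le_of_lt (min_le_left _ _) (by linarith)
  have hδ't : δ' ≤ t0/2 := min_le_right _ _
  obtain ⟨s1, hs1a, hs1b, hs1pos, hs1eq, hs1conv⟩ :=
    hEdense (t0 - δ') t0 (by linarith) (by linarith)
  obtain ⟨s2, hs2a, hs2b, hs2pos, hs2eq, hs2conv⟩ :=
    hEdense t0 (t0 + δ') (le_of_lt ht0) (by linarith)
  have hd1 : |finf s1 - finf t0| < ε/2 := by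
    have hdist : dist s1 t0 < δ := by
      rw [Real.dist_eq, abs_sub_lt_iff]
      constructor <;> linarith
    have := hδ hdist
    rwa [Real.dist_eq] at this
  have hd2 : |finf s2 - finf t0| < ε/2 := by
    have hdist : dist s2 t0 < δ := by
      rw [Real.dist_eq, abs_sub_lt_iff]
      constructor <;> linarith
    have := hδ hdist
    rwa [Real.dist_eq] at this
  have hfs1 : finf s1 < finf t0 + ε/2 := by
    have := (abs_sub_lt_iff.1 hd1).1
    linarith
  have hfs2 : finf t0 - ε/2 < finf s2 := by
    have := (abs_sub_lt_iff.1 hd2).2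
    linarith
  have hev1 : ∀ᶠ k in atTop, h k s1 < g s1 + ε/2 :=
    hs1conv.eventually (gt_mem_nhds (by linarith))
  have hev2 : ∀ᶠ k in atTop, g s2 - ε/2 < h k s2 :=
    hs2conv.eventually (lt_mem_nhds (by linarith))
  obtain ⟨K, hK⟩ := eventually_atTop.1 (hev1.and hev2)
  refine ⟨K, fun k hk => ?_⟩
  obtain ⟨hk1, hk2⟩ := hK k hk
  have hup : h k t0 ≤ h k s1 := hhanti k hs1pos ht0 hs1b.le
  have hdn : h k s2 ≤ h k t0 := hhanti k ht0 hs2pos hs2a.le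
  rw [Real.dist_eq, abs_sub_lt_iff]
  rw [← hs1eq] at hk1
  rw [← hs2eq] at hk2
  constructor
  · linarith
  · linarith
end

section
/- Let ℓ : (0,∞) → (0,∞) be slowly varying at ∞. Then there exists a function c : (0,∞) → (0,1) such that c(s) → 0, c(s)s → ∞, and ℓ(s)/ℓ(c(s)s) → 1 as s → ∞. -/
open MeasureTheory Filter Set Real

theorem stmt9 (ℓ : ℝ → ℝ) (hℓpos : ∀ x : ℝ, 0 < x → 0 < ℓ x)
    (hℓ : SlowlyVaryingAtTop ℓ) :
    ∃ c : ℝ → ℝ, (∀ s : ℝ, 0 < s → c s ∈ Set.Ioo (0:ℝ) 1) ∧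
      Tendsto c atTop (nhds 0) ∧
      Tendsto (fun s => c s * s) atTop atTop ∧
      Tendsto (fun s => ℓ s / ℓ (c s * s)) atTop (nhds 1) := by
  -- Step 1: the inverse ratios also tend to 1
  have hinv : ∀ n : ℕ, Tendsto (fun x => ℓ x / ℓ (x / ((n:ℝ) + 3))) atTop (nhds 1) := by
    intro n
    have hpos : (0:ℝ) < 1 / ((n:ℝ) + 3) := by positivity
    have h1 := (hℓ _ hpos).inv₀ one_ne_zero
    rw [inv_one] at h1
    refine h1.congr' ?_
    filter_upwards [eventually_gt_atTop (0:ℝ)] with x hx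
    rw [one_div_mul_eq_div, inv_div]
  -- Step 2: choose thresholds
  have hM : ∀ n : ℕ, ∃ M : ℝ, ∀ s ≥ M, |ℓ s / ℓ (s / ((n:ℝ) + 3)) - 1| < 1 / ((n:ℝ) + 1) := by
    intro n
    have hε : (0:ℝ) < 1 / ((n:ℝ) + 1) := by positivity
    have h := (Metric.tendsto_nhds.mp (hinv n)) _ hε
    simp only [Real.dist_eq] at h
    exact (eventually_atTop.mp h).imp fun M hM s hs => hM s hs
  choose M hMspec using hM
  -- Step 3: recursive sequence N
  set N : ℕ → ℝ := fun n =>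
    Nat.rec (max (M 0) 9) (fun n Nn => max (M (n+1)) (max (((n:ℝ)+4)^2) (Nn + 1))) n with hN
  have hNM : ∀ n, M n ≤ N n := by
    intro n; cases n with
    | zero => exact le_max_left _ _
    | succ k => exact le_max_left _ _
  have hNsq : ∀ n : ℕ, ((n:ℝ)+3)^2 ≤ N n := by
    intro n; cases n with
    | zero =>
      have h0 : N 0 = max (M 0) 9 := rfl
      rw [h0]
      norm_num
    | succ k =>
      have : (((k:ℝ)+1)+3)^2 = ((k:ℝ)+4)^2 := by ring
      rw [Nat.cast_succ, this]
      exact le_trans (le_max_left _ _) (le_max_right _ _)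
  have hNstep : ∀ n : ℕ, N n + 1 ≤ N (n+1) := by
    intro n
    exact le_trans (le_max_right _ _) (le_max_right _ _)
  have hNmono : Monotone N := monotone_nat_of_le_succ fun n => by linarith [hNstep n]
  -- Step 4: the index function
  have hex : ∀ s : ℝ, ∃ n : ℕ, s < N n := by
    intro s
    obtain ⟨n, hn⟩ := exists_nat_gt s
    refine ⟨n, lt_of_lt_of_le hn (le_trans ?_ (hNsq n))⟩
    nlinarith [Nat.cast_nonneg (α := ℝ) n]
  set m : ℝ → ℕ := fun s => Nat.find (hex s) with hm
  have hfind_le : ∀ (s : ℝ) (k : ℕ), N k ≤ s → k < m s := by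
    intro s k hk
    rw [hm, Nat.lt_find_iff]
    intro j hj
    exact not_lt.mpr (le_trans (hNmono hj) hk)
  have hprev : ∀ s : ℝ, 1 ≤ m s → N (m s - 1) ≤ s := by
    intro s hs
    have := Nat.find_min (hex s) (show m s - 1 < m s by omega)
    exact not_lt.mp this
  -- m tends to infinity
  have hmtop : Tendsto m atTop atTop := by
    refine tendsto_atTop_atTop.mpr fun k => ⟨N k, fun s hs => ?_⟩
    exact le_of_lt (hfind_le s k hs)
  have hmR : Tendsto (fun s => (m s : ℝ)) atTop atTop :=
    tendsto_natCast_atTop_atTop.comp hmtop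
  -- the function c
  refine ⟨fun s => 1 / ((m s : ℝ) + 2), ?_, ?_, ?_, ?_⟩
  · intro s hs
    constructor
    · positivity
    · rw [div_lt_one (by positivity)]
      have := Nat.cast_nonneg (α := ℝ) (m s)
      linarith
  · have h2 : Tendsto (fun s => (m s : ℝ) + 2) atTop atTop :=
      tendsto_atTop_add_const_right _ 2 hmR
    simpa [one_div, Function.comp_def] using tendsto_inv_atTop_zero.comp h2
  · refine tendsto_atTop_mono' atTop ?_ hmR
    filter_upwards [hmtop.eventually_ge_atTop 1] with s hs1
    have hcast : ((m s - 1 : ℕ) : ℝ) = (m s : ℝ) - 1 := by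
      rw [Nat.cast_sub hs1, Nat.cast_one]
    have hsN : N (m s - 1) ≤ s := hprev s hs1
    have hsq : ((m s : ℝ) + 2)^2 ≤ s := by
      have := hNsq (m s - 1)
      rw [hcast] at this
      have h2 : ((m s : ℝ) - 1 + 3)^2 = ((m s : ℝ) + 2)^2 := by ring
      rw [h2] at this
      linarith
    have hpos : (0:ℝ) < (m s : ℝ) + 2 := by positivity
    rw [one_div, inv_mul_eq_div, le_div_iff₀ hpos]
    nlinarith [Nat.cast_nonneg (α := ℝ) (m s)]
  · -- the limit of the ratio
    rw [← tendsto_sub_nhds_zero_iff]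
    have hbound : ∀ᶠ s in atTop, ‖ℓ s / ℓ (1 / ((m s : ℝ) + 2) * s) - 1‖ ≤ ((m s : ℝ))⁻¹ := by
      filter_upwards [hmtop.eventually_ge_atTop 1] with s hs1
      set n := m s - 1 with hn
      have hcast : ((n : ℕ) : ℝ) = (m s : ℝ) - 1 := by
        rw [hn, Nat.cast_sub hs1, Nat.cast_one]
      have hsN : N n ≤ s := hprev s hs1
      have hsM : M n ≤ s := le_trans (hNM n) hsN
      have h := hMspec n s hsM
      have e3 : ((n:ℝ) + 3) = (m s : ℝ) + 2 := by rw [hcast]; ring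
      have e1 : ((n:ℝ) + 1) = (m s : ℝ) := by rw [hcast]; ring
      rw [e3, e1] at h
      have hpos : (0:ℝ) < (m s : ℝ) + 2 := by positivity
      have harg : 1 / ((m s : ℝ) + 2) * s = s / ((m s : ℝ) + 2) := by ring
      rw [Real.norm_eq_abs, harg]
      rw [one_div] at h
      exact le_of_lt h
    have hz : Tendsto (fun s => ((m s : ℝ))⁻¹) atTop (nhds 0) :=
      tendsto_inv_atTop_zero.comp hmR
    exact squeeze_zero_norm' hbound hz
end
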